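/- arXiv:2406.14418 — 8 statements merged into one kernel-verified Lean document; each statement's English description precedes it below -/
import Mathlib

section
/- Assume each model set K_0, …, K_T is nonempty and symmetric. Then for every coefficient vector a = (a_0,…,a_T) ∈ ℝ^{m_0} × ⋯ × ℝ^{m_T}, the global worst-case error of the linear recovery map Δ_a satisfies gwce(Δ_a) = sup_{g_0 ∈ K_0} |(Q − Σ_{t=0}^T Σ_{i=1}^{m_t} a_{t,i} λ_{t,i})(g_0)| + Σ_{s=1}^T sup_{g_s ∈ K_s} |(Σ_{t=s}^T Σ_{i=1}^{m_t} a_{t,i} λ_{t,i})(g_s)|, both sides being taken in the extended nonnegative reals [0,∞]. -/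
/-! Writing `c t = ∑ i, a t i • lam t i`, an admissible sequence `f` is the same as a sequence of
increments `g s ∈ K s` (`g 0 = f 0`, `g s = f (s - 1) - f s`), and summation by parts turns the
error `Q (f 0) - ∑ t, c t (f t)` into `∑ s, L s (g s)` with `L 0 = Q - ∑ t, c t` and
`L s = ∑ t ≥ s, c t` for `s ≠ 0`. The increments range independently over the `K s`; by symmetry each
of them can be chosen so that `L s (g s) ≥ 0`, so the supremum of `|∑ s, L s (g s)|` is the sum of
the suprema of the `|L s|` over `K s`. -/

open scoped ENNReal
open Finset

section Decoupling

variable {ι E : Type*} [InvolutiveNeg E]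

lemma exists_mem_apply_eq_abs {K : Set E} (hK : K = -K) {L : E → ℝ}
    (hL : ∀ x, L (-x) = -L x) {x : E} (hx : x ∈ K) : ∃ y ∈ K, L y = |L x| := by
  rcases abs_choice (L x) with h | h
  · exact ⟨x, hx, h.symm⟩
  · exact ⟨-x, hK ▸ Set.neg_mem_neg.2 hx, by rw [hL, h]⟩

theorem biSup_ofReal_abs_sum_eq_sum_biSup [Fintype ι] {K : ι → Set E}
    (hne : ∀ i, (K i).Nonempty) (hsym : ∀ i, K i = -K i) {L : ι → E → ℝ}
    (hL : ∀ i x, L i (-x) = -L i x) :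
    ⨆ g ∈ Set.univ.pi K, ENNReal.ofReal |∑ i, L i (g i)| =
      ∑ i, ⨆ x ∈ K i, ENNReal.ofReal |L i x| := by
  refine le_antisymm (iSup₂_le fun g hg => ?_) ?_
  · calc ENNReal.ofReal |∑ i, L i (g i)|
        ≤ ENNReal.ofReal (∑ i, |L i (g i)|) :=
          ENNReal.ofReal_le_ofReal (abs_sum_le_sum_abs _ _)
      _ = ∑ i, ENNReal.ofReal |L i (g i)| :=
          ENNReal.ofReal_sum_of_nonneg fun i _ => abs_nonneg _
      _ ≤ ∑ i, ⨆ x ∈ K i, ENNReal.ofReal |L i x| :=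
          sum_le_sum fun i _ => le_iSup₂_of_le (g i) (hg i trivial) le_rfl
  have : ∀ i, Nonempty (K i) := fun i => (hne i).to_subtype
  calc ∑ i, ⨆ x ∈ K i, ENNReal.ofReal |L i x|
      = ∑ i, ⨆ g : ∀ j, K j, ENNReal.ofReal |L i (g i)| := by
        refine sum_congr rfl fun i _ => ?_
        rw [iSup_subtype']
        exact ((Function.surjective_eval (β := fun j => K j) i).iSup_comp
          fun x => ENNReal.ofReal |L i x|).symm
    _ = ⨆ g : ∀ j, K j, ∑ i, ENNReal.ofReal |L i (g i)| := by
        refine ENNReal.finsetSum_iSup fun g g' => ⟨fun i =>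
          if |L i (g i)| ≤ |L i (g' i)| then g' i else g i, fun i => ?_⟩
        dsimp only
        split_ifs with h
        · exact ⟨ENNReal.ofReal_le_ofReal h, le_rfl⟩
        · exact ⟨le_rfl, ENNReal.ofReal_le_ofReal (not_le.1 h).le⟩
    _ ≤ ⨆ g ∈ Set.univ.pi K, ENNReal.ofReal |∑ i, L i (g i)| := iSup_le fun g => by
        choose y hyK hy using fun i => exists_mem_apply_eq_abs (hsym i) (hL i) (g i).2
        have hy_nonneg : ∀ i, 0 ≤ L i (y i) := fun i => hy i ▸ abs_nonneg _
        calc ∑ i, ENNReal.ofReal |L i (g i)|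
            = ENNReal.ofReal |∑ i, L i (y i)| := by
              rw [abs_of_nonneg (sum_nonneg fun i _ => hy_nonneg i),
                ENNReal.ofReal_sum_of_nonneg fun i _ => hy_nonneg i]
              simp only [hy]
          _ ≤ _ := le_iSup₂_of_le y (fun i _ => hyK i) le_rfl

end Decoupling

lemma Fin.Ioc_zero_succ {T : ℕ} (t : Fin T) :
    Ioc 0 t.succ = insert t.succ (Ioc 0 t.castSucc) := by
  ext s
  simp only [mem_Ioc, mem_insert, Fin.lt_def, Fin.le_iff_val_le_val, Fin.ext_iff,
    Fin.val_succ, Fin.val_castSucc, Fin.val_zero]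
  omega

lemma Fin.sum_univ_eq_add_sum_Ioi_zero {M : Type*} [AddCommMonoid M] {T : ℕ}
    (φ : Fin (T + 1) → M) : ∑ s, φ s = φ 0 + ∑ s ∈ Ioi 0, φ s := by
  rw [Fin.sum_univ_succ, Fin.sum_Ioi_zero]

section Increments

variable {G : Type*} [AddCommGroup G] {T : ℕ}

def ofIncrements (g : Fin (T + 1) → G) (t : Fin (T + 1)) : G :=
  g 0 - ∑ s ∈ Ioc 0 t, g s

@[simp]
lemma ofIncrements_zero (g : Fin (T + 1) → G) : ofIncrements g 0 = g 0 := by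
  simp [ofIncrements]

lemma ofIncrements_succ (g : Fin (T + 1) → G) (t : Fin T) :
    ofIncrements g t.succ = ofIncrements g t.castSucc - g t.succ := by
  have : t.succ ∉ Ioc 0 t.castSucc := by simp [Fin.le_iff_val_le_val]
  rw [ofIncrements, ofIncrements, Fin.Ioc_zero_succ, sum_insert this]
  abel

theorem image_ofIncrements_pi (K : Fin (T + 1) → Set G) :
    ofIncrements '' Set.univ.pi K =
      {f | f 0 ∈ K 0 ∧ ∀ t : Fin T, f t.castSucc - f t.succ ∈ K t.succ} := by
  ext f
  constructor
  · rintro ⟨g, hg, rfl⟩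
    refine ⟨by simpa using hg 0 trivial, fun t => ?_⟩
    simpa [ofIncrements_succ] using hg t.succ trivial
  · rintro ⟨hf0, hf⟩
    refine ⟨Fin.cases (f 0) fun t => f t.castSucc - f t.succ, ?_, funext fun t => ?_⟩
    · intro s _
      cases s using Fin.cases with
      | zero => exact hf0
      | succ t => exact hf t
    · induction t using Fin.induction with
      | zero => simp
      | succ t ih => simp [ofIncrements_succ, ih]

theorem sum_apply_ofIncrements {M H : Type*} [AddCommGroup M] [FunLike H G M]
    [AddMonoidHomClass H G M] (c : Fin (T + 1) → H) (g : Fin (T + 1) → G) :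
    ∑ t, c t (ofIncrements g t) = ∑ t, c t (g 0) - ∑ s ∈ Ioi 0, ∑ t ∈ Ici s, c t (g s) := by
  simp only [ofIncrements, map_sub, map_sum, sum_sub_distrib]
  congr 1
  refine sum_comm' fun t s => ?_
  simp only [mem_Ioc, mem_univ, mem_Ioi, mem_Ici, true_and, and_comm]

end Increments

theorem statement0_general
    {F : Type*} [NormedAddCommGroup F] [NormedSpace ℝ F]
    (T : ℕ) (m : Fin (T + 1) → ℕ)
    (K : Fin (T + 1) → Set F)
    (lam : (t : Fin (T + 1)) → Fin (m t) → F →L[ℝ] ℝ)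
    (Q : F →L[ℝ] ℝ)
    (hKne : ∀ t, (K t).Nonempty)
    (hKsym : ∀ t, K t = -K t)
    (a : (t : Fin (T + 1)) → Fin (m t) → ℝ) :
    (⨆ f ∈ {f : Fin (T + 1) → F |
        f 0 ∈ K 0 ∧ ∀ t : Fin T, f t.castSucc - f t.succ ∈ K t.succ},
      ENNReal.ofReal
        |Q (f 0) - ∑ t, ∑ i, a t i * lam t i (f t)|) =
    (⨆ g ∈ K 0, ENNReal.ofReal |(Q - ∑ t, ∑ i, a t i • lam t i) g|) +
      ∑ s ∈ Finset.univ.filter (fun s : Fin (T + 1) => s ≠ 0),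
        ⨆ g ∈ K s, ENNReal.ofReal
          |(∑ t ∈ Finset.univ.filter (fun t => s ≤ t), ∑ i, a t i • lam t i) g| := by
  set c : Fin (T + 1) → F →L[ℝ] ℝ := fun t => ∑ i, a t i • lam t i
  set L : Fin (T + 1) → F →L[ℝ] ℝ :=
    Function.update (fun s => ∑ t ∈ Ici s, c t) 0 (Q - ∑ t, c t)
  have hc : ∀ t x, ∑ i, a t i * lam t i x = c t x := fun t x => by simp [c]
  have hIoi : univ.filter (fun s : Fin (T + 1) => s ≠ 0) = Ioi 0 := by
    ext s; simp
  have hL (s) (hs : s ∈ Ioi 0) : L s = ∑ t ∈ Ici s, c t :=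
    Function.update_of_ne (mem_Ioi.1 hs).ne' _ _
  have herr (g : Fin (T + 1) → F) :
      Q (ofIncrements g 0) - ∑ t, c t (ofIncrements g t) = ∑ s, L s (g s) := by
    have hLg : ∑ s ∈ Ioi 0, L s (g s) = ∑ s ∈ Ioi 0, ∑ t ∈ Ici s, c t (g s) :=
      sum_congr rfl fun s hs => by rw [hL s hs, _root_.sum_apply]
    rw [sum_apply_ofIncrements, Fin.sum_univ_eq_add_sum_Ioi_zero fun s => L s (g s), hLg]
    simp only [L, Function.update_self, ofIncrements_zero, sub_apply, _root_.sum_apply]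
    abel
  simp_rw [hc, ← image_ofIncrements_pi, iSup_image, herr]
  rw [biSup_ofReal_abs_sum_eq_sum_biSup hKne hKsym fun s => map_neg (L s),
    Fin.sum_univ_eq_add_sum_Ioi_zero, hIoi]
  refine congrArg₂ (· + ·) (by simp only [L, Function.update_self]) (sum_congr rfl fun s hs => ?_)
  rw [filter_le_eq_Ici, hL s hs]

/-- For symmetric nonempty model sets `K 0, …, K T`, the global worst-case
error of the linear recovery map `Δ_a` equals the decoupled sum of suprema. -/
theorem statement0
    {F : Type*} [NormedAddCommGroup F] [NormedSpace ℝ F] [CompleteSpace F]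
    (T : ℕ) (m : Fin (T + 1) → ℕ)
    (K : Fin (T + 1) → Set F)
    (lam : (t : Fin (T + 1)) → Fin (m t) → F →L[ℝ] ℝ)
    (Q : F →L[ℝ] ℝ)
    (hKne : ∀ t, (K t).Nonempty)
    (hKsym : ∀ t, K t = -K t)
    (a : (t : Fin (T + 1)) → Fin (m t) → ℝ) :
    (⨆ f ∈ {f : Fin (T + 1) → F |
        f 0 ∈ K 0 ∧ ∀ t : Fin T, f t.castSucc - f t.succ ∈ K t.succ},
      ENNReal.ofReal
        |Q (f 0) - ∑ t, ∑ i, a t i * lam t i (f t)|) =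
    (⨆ g ∈ K 0, ENNReal.ofReal |(Q - ∑ t, ∑ i, a t i • lam t i) g|) +
      ∑ s ∈ Finset.univ.filter (fun s : Fin (T + 1) => s ≠ 0),
        ⨆ g ∈ K s, ENNReal.ofReal
          |(∑ t ∈ Finset.univ.filter (fun t => s ≤ t), ∑ i, a t i • lam t i) g| :=
  statement0_general T m K lam Q hKne hKsym a
end

section
/- Let F, G_0, G_1 be real Hilbert spaces, let P_0 : F → G_0 and P_1 : F → G_1 be bounded linear maps, and let Λ_0 : F → ℝ^{m_0} and Λ_1 : F → ℝ^{m_1} be bounded linear maps. Suppose ker Λ_0 ⊆ ker P_1 or ker Λ_0 ⊆ ker Λ_1. Then the implication [P_0 f_0 = 0, P_1(f_0 − f_1) = 0, Λ_0 f_0 = 0 and Λ_1 f_1 = 0 together imply f_0 = 0 and f_1 = 0] holds if and only if both ker P_0 ∩ ker Λ_0 = {0} and ker P_1 ∩ ker Λ_1 = {0}. -/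
namespace LinearMap

variable {R M N₀ N₁ L₀ L₁ : Type*} [Ring R] [AddCommGroup M] [Module R M]
  [AddCommGroup N₀] [Module R N₀] [AddCommGroup N₁] [Module R N₁]
  [AddCommGroup L₀] [Module R L₀] [AddCommGroup L₁] [Module R L₁]

def CoupledKerTrivial (P₀ : M →ₗ[R] N₀) (P₁ : M →ₗ[R] N₁) (Λ₀ : M →ₗ[R] L₀)
    (Λ₁ : M →ₗ[R] L₁) : Prop :=
  ∀ f₀ f₁ : M, P₀ f₀ = 0 → P₁ (f₀ - f₁) = 0 → Λ₀ f₀ = 0 → Λ₁ f₁ = 0 → f₀ = 0 ∧ f₁ = 0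

variable {P₀ : M →ₗ[R] N₀} {P₁ : M →ₗ[R] N₁} {Λ₀ : M →ₗ[R] L₀} {Λ₁ : M →ₗ[R] L₁}

theorem CoupledKerTrivial.ker_inf_ker_eq_bot_right (h : CoupledKerTrivial P₀ P₁ Λ₀ Λ₁) :
    ker P₁ ⊓ ker Λ₁ = ⊥ := by
  refine (Submodule.eq_bot_iff _).2 fun f ⟨hP₁, hΛ₁⟩ ↦ ?_
  exact (h 0 f (map_zero P₀) (by simpa using hP₁) (map_zero Λ₀) hΛ₁).2

theorem CoupledKerTrivial.ker_inf_ker_eq_bot_left (h : CoupledKerTrivial P₀ P₁ Λ₀ Λ₁)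
    (hker : ker Λ₀ ≤ ker P₁ ∨ ker Λ₀ ≤ ker Λ₁) : ker P₀ ⊓ ker Λ₀ = ⊥ := by
  refine (Submodule.eq_bot_iff _).2 fun f ⟨hP₀, hΛ₀⟩ ↦ ?_
  rcases hker with hP₁ | hΛ₁
  · exact (h f 0 hP₀ (by simpa using hP₁ hΛ₀) hΛ₀ (map_zero Λ₁)).1
  · exact (h f f hP₀ (by simp) hΛ₀ (hΛ₁ hΛ₀)).1

theorem coupledKerTrivial_of_ker_inf_ker_eq_bot (h₀ : ker P₀ ⊓ ker Λ₀ = ⊥)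
    (h₁ : ker P₁ ⊓ ker Λ₁ = ⊥) : CoupledKerTrivial P₀ P₁ Λ₀ Λ₁ := by
  intro f₀ f₁ hP₀ hP₁ hΛ₀ hΛ₁
  obtain rfl : f₀ = 0 := (Submodule.eq_bot_iff _).1 h₀ f₀ ⟨hP₀, hΛ₀⟩
  refine ⟨rfl, (Submodule.eq_bot_iff _).1 h₁ f₁ ⟨?_, hΛ₁⟩⟩
  simpa using hP₁

theorem coupledKerTrivial_iff (hker : ker Λ₀ ≤ ker P₁ ∨ ker Λ₀ ≤ ker Λ₁) :
    CoupledKerTrivial P₀ P₁ Λ₀ Λ₁ ↔ ker P₀ ⊓ ker Λ₀ = ⊥ ∧ ker P₁ ⊓ ker Λ₁ = ⊥ :=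
  ⟨fun h ↦ ⟨h.ker_inf_ker_eq_bot_left hker, h.ker_inf_ker_eq_bot_right⟩,
    fun h ↦ coupledKerTrivial_of_ker_inf_ker_eq_bot h.1 h.2⟩

end LinearMap

theorem statement7_general
    {F G₀ G₁ : Type*}
    [NormedAddCommGroup F] [InnerProductSpace ℝ F]
    [NormedAddCommGroup G₀] [InnerProductSpace ℝ G₀]
    [NormedAddCommGroup G₁] [InnerProductSpace ℝ G₁]
    {m₀ m₁ : ℕ}
    (P₀ : F →L[ℝ] G₀) (P₁ : F →L[ℝ] G₁)
    (Λ₀ : F →L[ℝ] (Fin m₀ → ℝ)) (Λ₁ : F →L[ℝ] (Fin m₁ → ℝ))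
    (hker : LinearMap.ker (Λ₀ : F →ₗ[ℝ] (Fin m₀ → ℝ)) ≤ LinearMap.ker (P₁ : F →ₗ[ℝ] G₁) ∨
      LinearMap.ker (Λ₀ : F →ₗ[ℝ] (Fin m₀ → ℝ)) ≤ LinearMap.ker (Λ₁ : F →ₗ[ℝ] (Fin m₁ → ℝ))) :
    (∀ f₀ f₁ : F, P₀ f₀ = 0 → P₁ (f₀ - f₁) = 0 → Λ₀ f₀ = 0 → Λ₁ f₁ = 0 →
        f₀ = 0 ∧ f₁ = 0) ↔
      (LinearMap.ker (P₀ : F →ₗ[ℝ] G₀) ⊓ LinearMap.ker (Λ₀ : F →ₗ[ℝ] (Fin m₀ → ℝ)) = ⊥ ∧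
        LinearMap.ker (P₁ : F →ₗ[ℝ] G₁) ⊓ LinearMap.ker (Λ₁ : F →ₗ[ℝ] (Fin m₁ → ℝ)) = ⊥) :=
  LinearMap.coupledKerTrivial_iff hker

/-- In Hilbert spaces, assuming `ker Λ₀ ⊆ ker P₁` or `ker Λ₀ ⊆ ker Λ₁`,
the joint-kernel condition holds iff `ker P₀ ∩ ker Λ₀ = {0}` and
`ker P₁ ∩ ker Λ₁ = {0}`. -/
theorem statement7
    {F G₀ G₁ : Type*}
    [NormedAddCommGroup F] [InnerProductSpace ℝ F] [CompleteSpace F]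
    [NormedAddCommGroup G₀] [InnerProductSpace ℝ G₀] [CompleteSpace G₀]
    [NormedAddCommGroup G₁] [InnerProductSpace ℝ G₁] [CompleteSpace G₁]
    {m₀ m₁ : ℕ}
    (P₀ : F →L[ℝ] G₀) (P₁ : F →L[ℝ] G₁)
    (Λ₀ : F →L[ℝ] (Fin m₀ → ℝ)) (Λ₁ : F →L[ℝ] (Fin m₁ → ℝ))
    (hker : LinearMap.ker (Λ₀ : F →ₗ[ℝ] (Fin m₀ → ℝ)) ≤ LinearMap.ker (P₁ : F →ₗ[ℝ] G₁) ∨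
      LinearMap.ker (Λ₀ : F →ₗ[ℝ] (Fin m₀ → ℝ)) ≤ LinearMap.ker (Λ₁ : F →ₗ[ℝ] (Fin m₁ → ℝ))) :
    (∀ f₀ f₁ : F, P₀ f₀ = 0 → P₁ (f₀ - f₁) = 0 → Λ₀ f₀ = 0 → Λ₁ f₁ = 0 →
        f₀ = 0 ∧ f₁ = 0) ↔
      (LinearMap.ker (P₀ : F →ₗ[ℝ] G₀) ⊓ LinearMap.ker (Λ₀ : F →ₗ[ℝ] (Fin m₀ → ℝ)) = ⊥ ∧
        LinearMap.ker (P₁ : F →ₗ[ℝ] G₁) ⊓ LinearMap.ker (Λ₁ : F →ₗ[ℝ] (Fin m₁ → ℝ)) = ⊥) :=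
  statement7_general P₀ P₁ Λ₀ Λ₁ hker
end

section
/- For every τ ∈ (0,1) such that (1−τ)‖Rh‖² + τ‖Sh‖² > 0 for all h ∈ N∖{0}, the squared Chebyshev radius satisfies ρ² ≤ lwce_y(Q̃ f^τ)² ≤ ‖Q̃ h^τ‖², i.e., inf_{z ∈ Z} sup_{f ∈ C_y} ‖Q̃f − z‖² ≤ sup_{f ∈ C_y} ‖Q̃f − Q̃f^τ‖² ≤ ‖Q̃ h^τ‖². -/
open scoped ENNReal

open scoped RealInnerProductSpace

/-- If a quadratic `t ↦ 2tB + t²C` is nonnegative for all `t`, then `B = 0`. -/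
lemma quad_nonneg_imp_zero {B C : ℝ} (h : ∀ t : ℝ, 0 ≤ 2 * t * B + t ^ 2 * C) :
    B = 0 := by
  by_contra hB
  have hB2 : 0 < B ^ 2 := by positivity
  have hden : 0 < |C| + 2 := by positivity
  have h1 := h (-B * (1 / (|C| + 2)))
  have hCle : C ≤ |C| + 2 := by linarith [le_abs_self C]
  have key : 0 ≤ -2 * B ^ 2 * (|C| + 2) + B ^ 2 * C := by
    have h2 : 0 ≤ (2 * (-B * (1 / (|C| + 2))) * B + (-B * (1 / (|C| + 2))) ^ 2 * C)
        * (|C| + 2) ^ 2 := mul_nonneg h1 (sq_nonneg _)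
    have hne : (|C| + 2) ≠ 0 := ne_of_gt hden
    have heq : (2 * (-B * (1 / (|C| + 2))) * B + (-B * (1 / (|C| + 2))) ^ 2 * C)
        * (|C| + 2) ^ 2 = -2 * B ^ 2 * (|C| + 2) + B ^ 2 * C := by
      field_simp
    linarith [heq ▸ h2]
  have hBC : B ^ 2 * C ≤ B ^ 2 * (|C| + 2) := mul_le_mul_of_nonneg_left hCle hB2.le
  have hBD : 0 < B ^ 2 * (|C| + 2) := mul_pos hB2 hden
  linarith

/-- For the two-hyperellipsoid-intersection model, the squared Chebyshev
radius of `Q̃(C_y)` is bounded by the squared local worst-case error at `Q̃ f^τ`, which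
is in turn bounded by `‖Q̃ h^τ‖²`. -/
theorem statement8
    {F GR GS Z : Type*}
    [NormedAddCommGroup F] [InnerProductSpace ℝ F] [FiniteDimensional ℝ F]
    [NormedAddCommGroup GR] [InnerProductSpace ℝ GR] [FiniteDimensional ℝ GR]
    [NormedAddCommGroup GS] [InnerProductSpace ℝ GS] [FiniteDimensional ℝ GS]
    [NormedAddCommGroup Z] [InnerProductSpace ℝ Z] [FiniteDimensional ℝ Z]
    {m : ℕ}
    (R : F →ₗ[ℝ] GR) (S : F →ₗ[ℝ] GS) (Qt : F →ₗ[ℝ] Z) (Λ : F →ₗ[ℝ] (Fin m → ℝ))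
    (y : Fin m → ℝ)
    (hCne : {f : F | ‖R f‖ ≤ 1 ∧ ‖S f‖ ≤ 1 ∧ Λ f = y}.Nonempty)
    (τ : ℝ) (hτ : τ ∈ Set.Ioo (0 : ℝ) 1)
    (hpos : ∀ h ∈ LinearMap.ker Λ, h ≠ 0 →
      0 < (1 - τ) * ‖R h‖ ^ 2 + τ * ‖S h‖ ^ 2)
    -- `fτ` is the constrained regularizer
    (fτ : F) (hfτΛ : Λ fτ = y)
    (hfτmin : ∀ g : F, Λ g = y →
      (1 - τ) * ‖R fτ‖ ^ 2 + τ * ‖S fτ‖ ^ 2 ≤ (1 - τ) * ‖R g‖ ^ 2 + τ * ‖S g‖ ^ 2)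
    -- `lam = λ(τ)` is the maximum of the Rayleigh-type quotient over `ker Λ ∖ {0}`,
    -- attained at the normalized maximizer `hτ`
    (lam : ℝ)
    (hlam : ∀ h ∈ LinearMap.ker Λ,
      ‖Qt h‖ ^ 2 ≤ lam * ((1 - τ) * ‖R h‖ ^ 2 + τ * ‖S h‖ ^ 2))
    (hτvec : F) (hτmem : hτvec ∈ LinearMap.ker Λ)
    (hτattain : ‖Qt hτvec‖ ^ 2 = lam * ((1 - τ) * ‖R hτvec‖ ^ 2 + τ * ‖S hτvec‖ ^ 2))
    (hτnorm : (1 - τ) * ‖R hτvec‖ ^ 2 + τ * ‖S hτvec‖ ^ 2 =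
      1 - ((1 - τ) * ‖R fτ‖ ^ 2 + τ * ‖S fτ‖ ^ 2)) :
    (⨅ z : Z, ⨆ f ∈ {f : F | ‖R f‖ ≤ 1 ∧ ‖S f‖ ≤ 1 ∧ Λ f = y},
        ENNReal.ofReal (‖Qt f - z‖ ^ 2)) ≤
      (⨆ f ∈ {f : F | ‖R f‖ ≤ 1 ∧ ‖S f‖ ≤ 1 ∧ Λ f = y},
        ENNReal.ofReal (‖Qt f - Qt fτ‖ ^ 2)) ∧
    (⨆ f ∈ {f : F | ‖R f‖ ≤ 1 ∧ ‖S f‖ ≤ 1 ∧ Λ f = y},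
        ENNReal.ofReal (‖Qt f - Qt fτ‖ ^ 2)) ≤
      ENNReal.ofReal (‖Qt hτvec‖ ^ 2) := by
  obtain ⟨hτ0, hτ1⟩ := hτ
  constructor
  · exact iInf_le _ (Qt fτ)
  · refine iSup₂_le fun f hf => ?_
    obtain ⟨hRf, hSf, hΛf⟩ := hf
    set h : F := f - fτ with hdef
    have hker : h ∈ LinearMap.ker Λ := by
      simp [hdef, LinearMap.mem_ker, map_sub, hΛf, hfτΛ]
    have hQ : Qt f - Qt fτ = Qt h := by simp [hdef, map_sub]
    by_cases hz : h = 0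
    · have hffτ : f = fτ := by rwa [sub_eq_zero] at hz
      rw [hffτ]
      simp
    · -- expansions of the quadratic form along f = fτ + t • h
      have eR : ∀ t : ℝ, ‖R (fτ + t • h)‖ ^ 2
          = ‖R fτ‖ ^ 2 + 2 * t * ⟪R fτ, R h⟫ + t ^ 2 * ‖R h‖ ^ 2 := by
        intro t
        rw [map_add, map_smul, norm_add_sq_real, real_inner_smul_right, norm_smul,
          mul_pow, Real.norm_eq_abs, sq_abs]
        ring
      have eS : ∀ t : ℝ, ‖S (fτ + t • h)‖ ^ 2
          = ‖S fτ‖ ^ 2 + 2 * t * ⟪S fτ, S h⟫ + t ^ 2 * ‖S h‖ ^ 2 := by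
        intro t
        rw [map_add, map_smul, norm_add_sq_real, real_inner_smul_right, norm_smul,
          mul_pow, Real.norm_eq_abs, sq_abs]
        ring
      have hquad : ∀ t : ℝ, 0 ≤ 2 * t * ((1 - τ) * ⟪R fτ, R h⟫ + τ * ⟪S fτ, S h⟫)
          + t ^ 2 * ((1 - τ) * ‖R h‖ ^ 2 + τ * ‖S h‖ ^ 2) := by
        intro t
        have hg : Λ (fτ + t • h) = y := by
          simp [map_add, map_smul, LinearMap.mem_ker.mp hker, hfτΛ]
        have hmin := hfτmin (fτ + t • h) hg
        rw [eR t, eS t] at hmin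
        nlinarith [hmin]
      have hB0 : (1 - τ) * ⟪R fτ, R h⟫ + τ * ⟪S fτ, S h⟫ = 0 :=
        quad_nonneg_imp_zero hquad
      have hf1 : f = fτ + (1 : ℝ) • h := by simp [hdef]
      have eRf : ‖R f‖ ^ 2 = ‖R fτ‖ ^ 2 + 2 * ⟪R fτ, R h⟫ + ‖R h‖ ^ 2 := by
        rw [hf1, eR 1]; ring
      have eSf : ‖S f‖ ^ 2 = ‖S fτ‖ ^ 2 + 2 * ⟪S fτ, S h⟫ + ‖S h‖ ^ 2 := by
        rw [hf1, eS 1]; ring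
      have hJf : (1 - τ) * ‖R f‖ ^ 2 + τ * ‖S f‖ ^ 2 ≤ 1 := by
        have hR2 : ‖R f‖ ^ 2 ≤ 1 := by nlinarith [norm_nonneg (R f)]
        have hS2 : ‖S f‖ ^ 2 ≤ 1 := by nlinarith [norm_nonneg (S f)]
        nlinarith [hR2, hS2]
      have hCle : (1 - τ) * ‖R h‖ ^ 2 + τ * ‖S h‖ ^ 2
          ≤ 1 - ((1 - τ) * ‖R fτ‖ ^ 2 + τ * ‖S fτ‖ ^ 2) := by
        nlinarith [eRf, eSf, hB0, hJf]
      have hCpos : 0 < (1 - τ) * ‖R h‖ ^ 2 + τ * ‖S h‖ ^ 2 := hpos h hker hz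
      have hlamh := hlam h hker
      have hlam0 : 0 ≤ lam := by
        by_contra hneg
        push_neg at hneg
        have hmul : lam * ((1 - τ) * ‖R h‖ ^ 2 + τ * ‖S h‖ ^ 2) < 0 :=
          mul_neg_of_neg_of_pos hneg hCpos
        linarith [sq_nonneg ‖Qt h‖, hlamh]
      have hfinal : ‖Qt f - Qt fτ‖ ^ 2 ≤ ‖Qt hτvec‖ ^ 2 := by
        rw [hQ, hτattain, hτnorm]
        calc ‖Qt h‖ ^ 2 ≤ lam * ((1 - τ) * ‖R h‖ ^ 2 + τ * ‖S h‖ ^ 2) := hlamh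
          _ ≤ lam * (1 - ((1 - τ) * ‖R fτ‖ ^ 2 + τ * ‖S fτ‖ ^ 2)) :=
            mul_le_mul_of_nonneg_left hCle hlam0
      exact ENNReal.ofReal_le_ofReal hfinal
end

section
/- Let τ ∈ (0,1) be such that (1−τ)‖Rh‖² + τ‖Sh‖² > 0 for all h ∈ N∖{0}, and suppose that ‖R f^τ‖² + ‖R h^τ‖² = 1 and ‖S f^τ‖² + ‖S h^τ‖² = 1 (conditions that hold at the minimizer τ^y of τ ↦ ‖Q̃ h^τ‖²). If additionally ⟨R f^τ, R h^τ⟩ = 0 or ⟨S f^τ, S h^τ⟩ = 0, then both orthogonality relations hold, the squared Chebyshev radius equals ρ² = ‖Q̃ h^τ‖², and Q̃ f^τ is a Chebyshev center: lwce_y(Q̃ f^τ) = ρ. -/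
open scoped ENNReal

/-!
The first-order optimality condition for `f^τ` says that `f^τ` is orthogonal to `N` for the
weighted inner product `B(f, g) = (1 - τ)⟪Rf, Rg⟫ + τ⟪Sf, Sg⟫`. Applied to `h^τ`, it turns one
orthogonality relation into the other; then `f^τ ± h^τ` are feasible by Pythagoras, so any
centre is at distance at least `‖Q̃ h^τ‖` from `Q̃ f^τ + Q̃ h^τ` or `Q̃ f^τ - Q̃ h^τ`. Conversely,
for feasible `f` orthogonality gives `B(f - f^τ, f - f^τ) = B(f, f) - B(f^τ, f^τ) ≤ B(h^τ, h^τ)`,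
hence `‖Q̃ f - Q̃ f^τ‖ ≤ ‖Q̃ h^τ‖` by the definition of `λ(τ)`.
-/

lemma eq_zero_of_forall_nonneg_quadratic {a c : ℝ} (h : ∀ t : ℝ, 0 ≤ a * (t * t) + 2 * c * t) :
    c = 0 := by
  have := discrim_le_zero (K := ℝ) (c := 0) (by simpa using h)
  rw [discrim] at this
  nlinarith [sq_nonneg c]

section Chebyshev

variable {ι E : Type*} [NormedAddCommGroup E]

noncomputable def localWorstCaseError (s : Set ι) (q : ι → E) (z : E) : ℝ≥0∞ :=
  ⨆ i ∈ s, ENNReal.ofReal ‖q i - z‖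

lemma norm_le_max_norm_add_sub_norm_sub_sub [NormedSpace ℝ E] (c v z : E) :
    ‖v‖ ≤ max ‖c + v - z‖ ‖c - v - z‖ := by
  have : 2 * ‖v‖ ≤ ‖c + v - z‖ + ‖c - v - z‖ := calc
    2 * ‖v‖ = ‖(c + v - z) - (c - v - z)‖ := by
      rw [show (c + v - z) - (c - v - z) = (2 : ℝ) • v by rw [two_smul]; abel, norm_smul]
      norm_num
    _ ≤ ‖c + v - z‖ + ‖c - v - z‖ := norm_sub_le _ _
  linarith [le_max_left ‖c + v - z‖ ‖c - v - z‖, le_max_right ‖c + v - z‖ ‖c - v - z‖]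

lemma localWorstCaseError_le {s : Set ι} {q : ι → E} {z : E} {r : ℝ}
    (h : ∀ i ∈ s, ‖q i - z‖ ≤ r) : localWorstCaseError s q z ≤ ENNReal.ofReal r :=
  iSup₂_le fun i hi => ENNReal.ofReal_le_ofReal (h i hi)

lemma ofReal_norm_le_localWorstCaseError [NormedSpace ℝ E] {s : Set ι} {q : ι → E} {c v : E}
    (hadd : c + v ∈ q '' s) (hsub : c - v ∈ q '' s) (z : E) :
    ENNReal.ofReal ‖v‖ ≤ localWorstCaseError s q z := by
  obtain ⟨i, hi, hqi⟩ := hadd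
  obtain ⟨j, hj, hqj⟩ := hsub
  have hv := norm_le_max_norm_add_sub_norm_sub_sub c v z
  rw [← hqi, ← hqj] at hv
  rcases max_choice ‖q i - z‖ ‖q j - z‖ with hmax | hmax <;> rw [hmax] at hv
  · exact (ENNReal.ofReal_le_ofReal hv).trans (le_iSup₂_of_le i hi le_rfl)
  · exact (ENNReal.ofReal_le_ofReal hv).trans (le_iSup₂_of_le j hj le_rfl)

lemma iInf_localWorstCaseError_eq [NormedSpace ℝ E] {s : Set ι} {q : ι → E} {c v : E}
    (hle : ∀ i ∈ s, ‖q i - c‖ ≤ ‖v‖) (hadd : c + v ∈ q '' s) (hsub : c - v ∈ q '' s) :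
    ⨅ z, localWorstCaseError s q z = ENNReal.ofReal ‖v‖ :=
  le_antisymm (iInf_le_of_le c (localWorstCaseError_le hle))
    (le_iInf (ofReal_norm_le_localWorstCaseError hadd hsub))

end Chebyshev

section WeightedEnergy

variable {F GR GS V : Type*} [AddCommGroup F] [Module ℝ F]
  [NormedAddCommGroup GR] [InnerProductSpace ℝ GR] [NormedAddCommGroup GS] [InnerProductSpace ℝ GS]
  [AddCommGroup V] [Module ℝ V]
  (R : F →ₗ[ℝ] GR) (S : F →ₗ[ℝ] GS) (τ : ℝ)

noncomputable def weightedEnergy (f : F) : ℝ := (1 - τ) * ‖R f‖ ^ 2 + τ * ‖S f‖ ^ 2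

noncomputable def weightedInner (f g : F) : ℝ :=
  (1 - τ) * inner ℝ (R f) (R g) + τ * inner ℝ (S f) (S g)

def feasibleSet (Λ : F →ₗ[ℝ] V) (y : V) : Set F := {f | ‖R f‖ ≤ 1 ∧ ‖S f‖ ≤ 1 ∧ Λ f = y}

variable {R S τ}

lemma weightedEnergy_add (f g : F) :
    weightedEnergy R S τ (f + g) =
      weightedEnergy R S τ f + 2 * weightedInner R S τ f g + weightedEnergy R S τ g := by
  simp only [weightedEnergy, weightedInner, map_add, norm_add_sq_real]
  ring

lemma weightedEnergy_smul (t : ℝ) (f : F) :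
    weightedEnergy R S τ (t • f) = t ^ 2 * weightedEnergy R S τ f := by
  simp only [weightedEnergy, map_smul, norm_smul, Real.norm_eq_abs, mul_pow, sq_abs]
  ring

lemma weightedEnergy_nonneg (hτ : τ ∈ Set.Icc (0 : ℝ) 1) (f : F) :
    0 ≤ weightedEnergy R S τ f := by
  have := sub_nonneg.2 hτ.2
  have := hτ.1
  unfold weightedEnergy
  positivity

lemma weightedEnergy_le_one (hτ : τ ∈ Set.Icc (0 : ℝ) 1) {f : F} (hR : ‖R f‖ ≤ 1)
    (hS : ‖S f‖ ≤ 1) : weightedEnergy R S τ f ≤ 1 := by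
  have hR2 := pow_le_one₀ (norm_nonneg _) hR (n := 2)
  have hS2 := pow_le_one₀ (norm_nonneg _) hS (n := 2)
  unfold weightedEnergy
  nlinarith [hτ.1, hτ.2]

lemma weightedInner_eq_zero_of_isMin {Λ : F →ₗ[ℝ] V} {y : V} {f₀ h : F} (hf₀ : Λ f₀ = y)
    (hmin : ∀ g, Λ g = y → weightedEnergy R S τ f₀ ≤ weightedEnergy R S τ g)
    (hh : h ∈ LinearMap.ker Λ) : weightedInner R S τ f₀ h = 0 := by
  refine eq_zero_of_forall_nonneg_quadratic (a := weightedEnergy R S τ h) fun t => ?_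
  have := hmin (f₀ + t • h) (by simp [hf₀, LinearMap.mem_ker.mp hh])
  rw [weightedEnergy_add, weightedEnergy_smul] at this
  simp only [weightedInner, map_smul, inner_smul_right] at this ⊢
  nlinarith

lemma weightedEnergy_sub_eq {f f₀ : F} (horth : weightedInner R S τ f₀ (f - f₀) = 0) :
    weightedEnergy R S τ (f - f₀) = weightedEnergy R S τ f - weightedEnergy R S τ f₀ := by
  have := weightedEnergy_add (R := R) (S := S) (τ := τ) f₀ (f - f₀)
  rw [add_sub_cancel, horth] at this
  linarith

lemma add_mem_feasibleSet_and_sub_mem {Λ : F →ₗ[ℝ] V} {y : V} {f h : F} (hf : Λ f = y)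
    (hh : h ∈ LinearMap.ker Λ) (hRorth : inner ℝ (R f) (R h) = (0 : ℝ))
    (hSorth : inner ℝ (S f) (S h) = (0 : ℝ)) (hRone : ‖R f‖ ^ 2 + ‖R h‖ ^ 2 = 1)
    (hSone : ‖S f‖ ^ 2 + ‖S h‖ ^ 2 = 1) :
    f + h ∈ feasibleSet R S Λ y ∧ f - h ∈ feasibleSet R S Λ y := by
  have hΛ : Λ h = 0 := hh
  have hR := norm_add_sq_eq_norm_sq_add_norm_sq_real hRorth
  have hR' := norm_sub_sq_eq_norm_sq_add_norm_sq_real hRorth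
  have hS := norm_add_sq_eq_norm_sq_add_norm_sq_real hSorth
  have hS' := norm_sub_sq_eq_norm_sq_add_norm_sq_real hSorth
  simp only [← map_add, ← map_sub, ← sq] at hR hR' hS hS'
  refine ⟨⟨?_, ?_, by simp [hf, hΛ]⟩, ⟨?_, ?_, by simp [hf, hΛ]⟩⟩ <;>
    exact (pow_le_one_iff_of_nonneg (norm_nonneg _) two_ne_zero).1 (by linarith)

lemma inner_eq_zero_and_inner_eq_zero_of_weightedInner_eq_zero (hτ : τ ∈ Set.Ioo (0 : ℝ) 1)
    {f h : F} (hB : weightedInner R S τ f h = 0)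
    (horth : inner ℝ (R f) (R h) = (0 : ℝ) ∨ inner ℝ (S f) (S h) = (0 : ℝ)) :
    inner ℝ (R f) (R h) = (0 : ℝ) ∧ inner ℝ (S f) (S h) = (0 : ℝ) := by
  unfold weightedInner at hB
  rcases horth with h | h <;> rw [h] at hB <;> simp_all [hτ.1.ne', sub_ne_zero.2 hτ.2.ne']

lemma norm_map_sub_le_of_mem_feasibleSet {Z : Type*} [NormedAddCommGroup Z] [Module ℝ Z]
    {Q : F →ₗ[ℝ] Z} {Λ : F →ₗ[ℝ] V} {y : V} {f₀ h : F} {lam : ℝ} (hτ : τ ∈ Set.Icc (0 : ℝ) 1)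
    (hf₀ : Λ f₀ = y) (hB : ∀ g ∈ LinearMap.ker Λ, weightedInner R S τ f₀ g = 0)
    (hlam : ∀ g ∈ LinearMap.ker Λ, ‖Q g‖ ^ 2 ≤ lam * weightedEnergy R S τ g)
    (hattain : ‖Q h‖ ^ 2 = lam * weightedEnergy R S τ h)
    (hnorm : weightedEnergy R S τ h = 1 - weightedEnergy R S τ f₀)
    {f : F} (hf : f ∈ feasibleSet R S Λ y) : ‖Q f - Q f₀‖ ≤ ‖Q h‖ := by
  obtain ⟨hRf, hSf, hfy⟩ := hf
  have hker : f - f₀ ∈ LinearMap.ker Λ := by simp [hfy, hf₀]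
  have hE := weightedEnergy_sub_eq (hB _ hker)
  have hE₀ := weightedEnergy_nonneg hτ (R := R) (S := S) (f - f₀)
  have hE₁ := weightedEnergy_le_one hτ hRf hSf
  have hQ := hlam _ hker
  rw [← map_sub, ← pow_le_pow_iff_left₀ (norm_nonneg _) (norm_nonneg _) two_ne_zero]
  rcases le_total 0 lam with hl | hl <;> nlinarith [sq_nonneg ‖Q h‖]

end WeightedEnergy

theorem statement9_general
    {F GR GS Z : Type*}
    [NormedAddCommGroup F] [InnerProductSpace ℝ F]
    [NormedAddCommGroup GR] [InnerProductSpace ℝ GR]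
    [NormedAddCommGroup GS] [InnerProductSpace ℝ GS]
    [NormedAddCommGroup Z] [InnerProductSpace ℝ Z]
    {m : ℕ}
    (R : F →ₗ[ℝ] GR) (S : F →ₗ[ℝ] GS) (Qt : F →ₗ[ℝ] Z) (Λ : F →ₗ[ℝ] (Fin m → ℝ))
    (y : Fin m → ℝ)
    (τ : ℝ) (hτ : τ ∈ Set.Ioo (0 : ℝ) 1)
    (fτ : F) (hfτΛ : Λ fτ = y)
    (hfτmin : ∀ g : F, Λ g = y →
      (1 - τ) * ‖R fτ‖ ^ 2 + τ * ‖S fτ‖ ^ 2 ≤ (1 - τ) * ‖R g‖ ^ 2 + τ * ‖S g‖ ^ 2)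
    (lam : ℝ)
    (hlam : ∀ h ∈ LinearMap.ker Λ,
      ‖Qt h‖ ^ 2 ≤ lam * ((1 - τ) * ‖R h‖ ^ 2 + τ * ‖S h‖ ^ 2))
    (hτvec : F) (hτmem : hτvec ∈ LinearMap.ker Λ)
    (hτattain : ‖Qt hτvec‖ ^ 2 = lam * ((1 - τ) * ‖R hτvec‖ ^ 2 + τ * ‖S hτvec‖ ^ 2))
    (hτnorm : (1 - τ) * ‖R hτvec‖ ^ 2 + τ * ‖S hτvec‖ ^ 2 =
      1 - ((1 - τ) * ‖R fτ‖ ^ 2 + τ * ‖S fτ‖ ^ 2))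
    -- norm identities holding at the minimizer `τ^y` of `τ ↦ ‖Q̃ h^τ‖²`
    (hRone : ‖R fτ‖ ^ 2 + ‖R hτvec‖ ^ 2 = 1)
    (hSone : ‖S fτ‖ ^ 2 + ‖S hτvec‖ ^ 2 = 1)
    -- one of the orthogonality relations
    (horth : (inner ℝ (R fτ) (R hτvec) : ℝ) = 0 ∨ (inner ℝ (S fτ) (S hτvec) : ℝ) = 0) :
    (inner ℝ (R fτ) (R hτvec) : ℝ) = 0 ∧ (inner ℝ (S fτ) (S hτvec) : ℝ) = 0 ∧
    (⨅ z : Z, ⨆ f ∈ {f : F | ‖R f‖ ≤ 1 ∧ ‖S f‖ ≤ 1 ∧ Λ f = y},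
        ENNReal.ofReal ‖Qt f - z‖) ^ 2 = ENNReal.ofReal (‖Qt hτvec‖ ^ 2) ∧
    (⨆ f ∈ {f : F | ‖R f‖ ≤ 1 ∧ ‖S f‖ ≤ 1 ∧ Λ f = y},
        ENNReal.ofReal ‖Qt f - Qt fτ‖) =
      ⨅ z : Z, ⨆ f ∈ {f : F | ‖R f‖ ≤ 1 ∧ ‖S f‖ ≤ 1 ∧ Λ f = y},
        ENNReal.ofReal ‖Qt f - z‖ := by
  have hB : ∀ h ∈ LinearMap.ker Λ, weightedInner R S τ fτ h = 0 :=
    fun h hh => weightedInner_eq_zero_of_isMin hfτΛ hfτmin hh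
  obtain ⟨hRorth, hSorth⟩ :=
    inner_eq_zero_and_inner_eq_zero_of_weightedInner_eq_zero hτ (hB hτvec hτmem) horth
  have hle : ∀ f ∈ feasibleSet R S Λ y, ‖Qt f - Qt fτ‖ ≤ ‖Qt hτvec‖ := fun f hf =>
    norm_map_sub_le_of_mem_feasibleSet (Set.Ioo_subset_Icc_self hτ) hfτΛ hB hlam hτattain
      hτnorm hf
  obtain ⟨hadd, hsub⟩ := add_mem_feasibleSet_and_sub_mem hfτΛ hτmem hRorth hSorth hRone hSone
  have hradius := iInf_localWorstCaseError_eq hle (c := Qt fτ)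
    ⟨_, hadd, map_add Qt fτ hτvec⟩ ⟨_, hsub, map_sub Qt fτ hτvec⟩
  refine ⟨hRorth, hSorth, ?_, ?_⟩
  · rw [ENNReal.ofReal_pow (norm_nonneg _)]
    exact congrArg (· ^ 2) hradius
  · exact le_antisymm (hradius ▸ localWorstCaseError_le hle) (iInf_le _ (Qt fτ))

/-- Under the norm identities `‖Rf^τ‖² + ‖Rh^τ‖² = 1` and
`‖Sf^τ‖² + ‖Sh^τ‖² = 1`, if one of the orthogonality relations
`⟨Rf^τ, Rh^τ⟩ = 0` or `⟨Sf^τ, Sh^τ⟩ = 0` holds, then both hold, the squared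
Chebyshev radius equals `‖Q̃ h^τ‖²`, and `Q̃ f^τ` is a Chebyshev center. -/
theorem statement9
    {F GR GS Z : Type*}
    [NormedAddCommGroup F] [InnerProductSpace ℝ F] [FiniteDimensional ℝ F]
    [NormedAddCommGroup GR] [InnerProductSpace ℝ GR] [FiniteDimensional ℝ GR]
    [NormedAddCommGroup GS] [InnerProductSpace ℝ GS] [FiniteDimensional ℝ GS]
    [NormedAddCommGroup Z] [InnerProductSpace ℝ Z] [FiniteDimensional ℝ Z]
    {m : ℕ}
    (R : F →ₗ[ℝ] GR) (S : F →ₗ[ℝ] GS) (Qt : F →ₗ[ℝ] Z) (Λ : F →ₗ[ℝ] (Fin m → ℝ))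
    (y : Fin m → ℝ)
    (hCne : {f : F | ‖R f‖ ≤ 1 ∧ ‖S f‖ ≤ 1 ∧ Λ f = y}.Nonempty)
    (τ : ℝ) (hτ : τ ∈ Set.Ioo (0 : ℝ) 1)
    (hpos : ∀ h ∈ LinearMap.ker Λ, h ≠ 0 →
      0 < (1 - τ) * ‖R h‖ ^ 2 + τ * ‖S h‖ ^ 2)
    (fτ : F) (hfτΛ : Λ fτ = y)
    (hfτmin : ∀ g : F, Λ g = y →
      (1 - τ) * ‖R fτ‖ ^ 2 + τ * ‖S fτ‖ ^ 2 ≤ (1 - τ) * ‖R g‖ ^ 2 + τ * ‖S g‖ ^ 2)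
    (lam : ℝ)
    (hlam : ∀ h ∈ LinearMap.ker Λ,
      ‖Qt h‖ ^ 2 ≤ lam * ((1 - τ) * ‖R h‖ ^ 2 + τ * ‖S h‖ ^ 2))
    (hτvec : F) (hτmem : hτvec ∈ LinearMap.ker Λ)
    (hτattain : ‖Qt hτvec‖ ^ 2 = lam * ((1 - τ) * ‖R hτvec‖ ^ 2 + τ * ‖S hτvec‖ ^ 2))
    (hτnorm : (1 - τ) * ‖R hτvec‖ ^ 2 + τ * ‖S hτvec‖ ^ 2 =
      1 - ((1 - τ) * ‖R fτ‖ ^ 2 + τ * ‖S fτ‖ ^ 2))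
    -- norm identities holding at the minimizer `τ^y` of `τ ↦ ‖Q̃ h^τ‖²`
    (hRone : ‖R fτ‖ ^ 2 + ‖R hτvec‖ ^ 2 = 1)
    (hSone : ‖S fτ‖ ^ 2 + ‖S hτvec‖ ^ 2 = 1)
    -- one of the orthogonality relations
    (horth : (inner ℝ (R fτ) (R hτvec) : ℝ) = 0 ∨ (inner ℝ (S fτ) (S hτvec) : ℝ) = 0) :
    (inner ℝ (R fτ) (R hτvec) : ℝ) = 0 ∧ (inner ℝ (S fτ) (S hτvec) : ℝ) = 0 ∧
    (⨅ z : Z, ⨆ f ∈ {f : F | ‖R f‖ ≤ 1 ∧ ‖S f‖ ≤ 1 ∧ Λ f = y},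
        ENNReal.ofReal ‖Qt f - z‖) ^ 2 = ENNReal.ofReal (‖Qt hτvec‖ ^ 2) ∧
    (⨆ f ∈ {f : F | ‖R f‖ ≤ 1 ∧ ‖S f‖ ≤ 1 ∧ Λ f = y},
        ENNReal.ofReal ‖Qt f - Qt fτ‖) =
      ⨅ z : Z, ⨆ f ∈ {f : F | ‖R f‖ ≤ 1 ∧ ‖S f‖ ≤ 1 ∧ Λ f = y},
        ENNReal.ofReal ‖Qt f - z‖ :=
  statement9_general R S Qt Λ y τ hτ fτ hfτΛ hfτmin lam hlam hτvec hτmem hτattain hτnorm hRone hSone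
    horth
end

section
/- The squared Chebyshev radius ρ² = inf_{z ∈ Z} sup_{f ∈ C_y} ‖Q̃f − z‖² equals the infimum of a·(1 − ‖T Λ†y‖²) + b over all a, b ≥ 0 satisfying both: (1) a‖Th‖² ≥ ‖Q̃h‖² for all h ∈ N, and (2) a‖Th‖² + 2 a t ⟨Th, T Λ†y⟩ + b t² ≥ 0 for all h ∈ N and all t ∈ ℝ. -/
/-!
Let `T h₁` be the orthogonal projection of `T w` onto `T(N)`, `N = ker Λ`, and `f₀ = w - h₁`.
Then `T f₀ ⊥ T(N)`, so the feasible set is `f₀ + {u ∈ N : ‖T u‖² ≤ r²}` with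
`r² = 1 - ‖T f₀‖²`. Since `T` is injective on `N`, `a⋆ = max {‖Q̃ u‖² : u ∈ N, ‖T u‖ ≤ 1}` is
attained at some `u₀`. The centre `Q̃ f₀` shows `ρ² ≤ a⋆ r²`; the two feasible points
`f₀ ± r u₀` have images `2 r ‖Q̃ u₀‖` apart, so `ρ² ≥ a⋆ r²`.
For a feasible pair `(a, b)`, constraint (1) at `u₀` gives `a ≥ a⋆` and constraint (2) at
`h = h₁, t = -1` gives `b ≥ a ‖T h₁‖²`, so the objective is at least `a r² ≥ a⋆ r²`; the pair
`(a⋆, a⋆ ‖T h₁‖²)` attains it, its second constraint reading `a⋆ ‖T h + t T h₁‖² ≥ 0`.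
-/

open scoped ENNReal RealInnerProductSpace
open LinearMap (ker)

theorem norm_le_norm_add_or_norm_le_norm_sub {E : Type*} [SeminormedAddCommGroup E]
    [NormedSpace ℝ E] (x v : E) : ‖v‖ ≤ ‖x + v‖ ∨ ‖v‖ ≤ ‖x - v‖ := by
  by_contra! h
  have htwo : ‖(x + v) - (x - v)‖ = 2 * ‖v‖ := by
    rw [add_sub_sub_cancel, ← two_smul ℝ v, norm_smul, Real.norm_two]
  linarith [norm_sub_le (x + v) (x - v)]

section MaximalRatio

variable {E G Z : Type*} [NormedAddCommGroup E] [NormedSpace ℝ E] [FiniteDimensional ℝ E]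
  [NormedAddCommGroup G] [NormedSpace ℝ G] [NormedAddCommGroup Z] [NormedSpace ℝ Z]

theorem LinearMap.isCompact_setOf_norm_le_one {T : E →ₗ[ℝ] G} (hT : ker T = ⊥) :
    IsCompact {u | ‖T u‖ ≤ 1} := by
  obtain ⟨K, -, hK⟩ := T.exists_antilipschitzWith hT
  have hset : {u | ‖T u‖ ≤ 1} = T ⁻¹' Metric.closedBall 0 1 := by ext; simp
  rw [hset]
  exact Metric.isCompact_of_isClosed_isBounded
    (Metric.isClosed_closedBall.preimage T.continuous_of_finiteDimensional)
    (hK.isBounded_preimage Metric.isBounded_closedBall)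

theorem LinearMap.exists_forall_norm_le_mul_norm {T : E →ₗ[ℝ] G} (hT : ker T = ⊥)
    (Q : E →ₗ[ℝ] Z) : ∃ u₀, ‖T u₀‖ ≤ 1 ∧ ∀ h, ‖Q h‖ ≤ ‖Q u₀‖ * ‖T h‖ := by
  obtain ⟨u₀, hu₀, hmax⟩ := (isCompact_setOf_norm_le_one hT).exists_isMaxOn
    ⟨0, by simp⟩ Q.continuous_of_finiteDimensional.norm.continuousOn
  refine ⟨u₀, hu₀, fun h => ?_⟩
  rcases eq_or_ne (T h) 0 with hTh | hTh
  · rw [← map_zero T] at hTh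
    simp [LinearMap.ker_eq_bot.1 hT hTh]
  · have hpos : 0 < ‖T h‖ := norm_pos_iff.2 hTh
    have hle : ‖Q (‖T h‖⁻¹ • h)‖ ≤ ‖Q u₀‖ :=
      hmax (by simp [norm_smul, inv_mul_cancel₀ hpos.ne'])
    rwa [map_smul, norm_smul, norm_inv, norm_norm, inv_mul_le_iff₀ hpos, mul_comm] at hle

end MaximalRatio

section ChebyshevRadius

variable {F G Z V : Type*} [NormedAddCommGroup F] [InnerProductSpace ℝ F]
  [NormedAddCommGroup G] [InnerProductSpace ℝ G] [NormedAddCommGroup Z] [InnerProductSpace ℝ Z]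
  [AddCommGroup V] [Module ℝ V] {T : F →ₗ[ℝ] G} {Q : F →ₗ[ℝ] Z} {N : Submodule ℝ F}

theorem exists_mem_forall_norm_le_mul_norm [FiniteDimensional ℝ F] (Q : F →ₗ[ℝ] Z)
    (hN : ker T ⊓ N = ⊥) : ∃ u₀ ∈ N, ‖T u₀‖ ≤ 1 ∧ ∀ h ∈ N, ‖Q h‖ ≤ ‖Q u₀‖ * ‖T h‖ := by
  have hker : ker (T.domRestrict N) = ⊥ := by
    rw [LinearMap.ker_domRestrict, ← Submodule.disjoint_iff_comap_eq_bot]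
    exact (disjoint_iff.2 hN).symm
  obtain ⟨u₀, hTu₀, hmax⟩ := LinearMap.exists_forall_norm_le_mul_norm hker (Q.domRestrict N)
  exact ⟨u₀, u₀.2, hTu₀, fun h hh => hmax ⟨h, hh⟩⟩

theorem exists_mem_forall_inner_map_sub_eq_zero [FiniteDimensional ℝ F] (T : F →ₗ[ℝ] G)
    (N : Submodule ℝ F) (w : F) : ∃ h₁ ∈ N, ∀ h ∈ N, ⟪T (w - h₁), T h⟫ = 0 := by
  obtain ⟨_, ⟨h₁, hh₁, rfl⟩, z, hz, hw⟩ := (N.map T).exists_add_mem_mem_orthogonal (T w)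
  refine ⟨h₁, hh₁, fun h hh => ?_⟩
  rw [map_sub, hw, add_sub_cancel_left]
  exact Submodule.inner_left_of_mem_orthogonal (Submodule.mem_map_of_mem hh) hz

variable {f₀ u₀ : F}

theorem norm_map_add_sq (hf₀ : ∀ h ∈ N, ⟪T f₀, T h⟫ = 0) {u : F} (hu : u ∈ N) :
    ‖T (f₀ + u)‖ ^ 2 = ‖T f₀‖ ^ 2 + ‖T u‖ ^ 2 := by
  rw [map_add, sq, sq, sq, norm_add_sq_eq_norm_sq_add_norm_sq_real (hf₀ u hu)]

theorem norm_map_le_norm_map_add (hf₀ : ∀ h ∈ N, ⟪T f₀, T h⟫ = 0) {u : F} (hu : u ∈ N) :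
    ‖T f₀‖ ≤ ‖T (f₀ + u)‖ := by
  have hsq := norm_map_add_sq hf₀ hu
  nlinarith [norm_nonneg (T f₀), norm_nonneg (T (f₀ + u)), sq_nonneg ‖T u‖]

variable {w h₁ : F}

theorem inner_map_eq_of_forall_inner_map_sub_eq_zero
    (hperp : ∀ h ∈ N, ⟪T (w - h₁), T h⟫ = 0) {h : F} (hh : h ∈ N) :
    ⟪T h, T w⟫ = ⟪T h, T h₁⟫ := by
  have hzero := hperp h hh
  rw [map_sub, inner_sub_left, sub_eq_zero] at hzero
  rw [real_inner_comm, hzero, real_inner_comm]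

theorem norm_map_sq_eq_of_forall_inner_map_sub_eq_zero (hh₁ : h₁ ∈ N)
    (hperp : ∀ h ∈ N, ⟪T (w - h₁), T h⟫ = 0) :
    ‖T w‖ ^ 2 = ‖T (w - h₁)‖ ^ 2 + ‖T h₁‖ ^ 2 := by
  rw [← norm_map_add_sq hperp hh₁, sub_add_cancel]

theorem mul_norm_sq_add_inner_add_mul_sq_nonneg (hperp : ∀ h ∈ N, ⟪T (w - h₁), T h⟫ = 0) {a : ℝ}
    (ha : 0 ≤ a) {h : F} (hh : h ∈ N) (t : ℝ) :
    0 ≤ a * ‖T h‖ ^ 2 + 2 * a * t * ⟪T h, T w⟫ + a * ‖T h₁‖ ^ 2 * t ^ 2 := by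
  have hexp : ‖T h + t • T h₁‖ ^ 2 = ‖T h‖ ^ 2 + 2 * t * ⟪T h, T h₁⟫ + t ^ 2 * ‖T h₁‖ ^ 2 := by
    rw [norm_add_sq_real, real_inner_smul_right, norm_smul, Real.norm_eq_abs, mul_pow, sq_abs]
    ring
  rw [inner_map_eq_of_forall_inner_map_sub_eq_zero hperp hh]
  nlinarith [mul_nonneg ha (sq_nonneg ‖T h + t • T h₁‖)]

theorem le_objective_of_feasible (hh₁ : h₁ ∈ N) (hperp : ∀ h ∈ N, ⟪T (w - h₁), T h⟫ = 0)
    (hr : ‖T (w - h₁)‖ ≤ 1) (hu₀ : u₀ ∈ N) (hTu₀ : ‖T u₀‖ ≤ 1) {a b : ℝ} (ha : 0 ≤ a)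
    (h1 : ∀ h ∈ N, ‖Q h‖ ^ 2 ≤ a * ‖T h‖ ^ 2)
    (h2 : ∀ h ∈ N, ∀ t : ℝ, 0 ≤ a * ‖T h‖ ^ 2 + 2 * a * t * ⟪T h, T w⟫ + b * t ^ 2) :
    ‖Q u₀‖ ^ 2 * (1 - ‖T (w - h₁)‖ ^ 2) ≤ a * (1 - ‖T w‖ ^ 2) + b := by
  have hb : a * ‖T h₁‖ ^ 2 ≤ b := by
    have h2h₁ := h2 h₁ hh₁ (-1)
    rw [inner_map_eq_of_forall_inner_map_sub_eq_zero hperp hh₁, real_inner_self_eq_norm_sq]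
      at h2h₁
    linarith
  have ha₀ : ‖Q u₀‖ ^ 2 ≤ a :=
    (h1 u₀ hu₀).trans (mul_le_of_le_one_right ha (pow_le_one₀ (norm_nonneg _) hTu₀))
  have hr₀ : 0 ≤ 1 - ‖T (w - h₁)‖ ^ 2 := sub_nonneg.2 (pow_le_one₀ (norm_nonneg _) hr)
  calc ‖Q u₀‖ ^ 2 * (1 - ‖T (w - h₁)‖ ^ 2) ≤ a * (1 - ‖T (w - h₁)‖ ^ 2) := by gcongr
    _ = a * (1 - ‖T w‖ ^ 2) + a * ‖T h₁‖ ^ 2 := by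
      rw [norm_map_sq_eq_of_forall_inner_map_sub_eq_zero hh₁ hperp]; ring
    _ ≤ a * (1 - ‖T w‖ ^ 2) + b := by gcongr

variable {Λ : F →ₗ[ℝ] V} {y : V}

theorem norm_sq_map_sub_le (hf₀Λ : Λ f₀ = y) (hf₀ : ∀ h ∈ ker Λ, ⟪T f₀, T h⟫ = 0)
    (hmax : ∀ h ∈ ker Λ, ‖Q h‖ ≤ ‖Q u₀‖ * ‖T h‖) {f : F} (hf : ‖T f‖ ≤ 1 ∧ Λ f = y) :
    ‖Q f - Q f₀‖ ^ 2 ≤ ‖Q u₀‖ ^ 2 * (1 - ‖T f₀‖ ^ 2) := by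
  have hu : f - f₀ ∈ ker Λ := by simp [hf.2, hf₀Λ]
  have hpyth := norm_map_add_sq hf₀ hu
  rw [add_sub_cancel] at hpyth
  have hTf : ‖T f‖ ^ 2 ≤ 1 := pow_le_one₀ (norm_nonneg _) hf.1
  calc ‖Q f - Q f₀‖ ^ 2 = ‖Q (f - f₀)‖ ^ 2 := by rw [map_sub]
    _ ≤ (‖Q u₀‖ * ‖T (f - f₀)‖) ^ 2 := pow_le_pow_left₀ (norm_nonneg _) (hmax _ hu) 2
    _ = ‖Q u₀‖ ^ 2 * ‖T (f - f₀)‖ ^ 2 := mul_pow _ _ _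
    _ ≤ ‖Q u₀‖ ^ 2 * (1 - ‖T f₀‖ ^ 2) := by gcongr; linarith

theorem exists_feasible_le_norm_sq_sub (hf₀Λ : Λ f₀ = y) (hf₀ : ∀ h ∈ ker Λ, ⟪T f₀, T h⟫ = 0)
    (hf₀1 : ‖T f₀‖ ≤ 1) (hu₀ : u₀ ∈ ker Λ) (hTu₀ : ‖T u₀‖ ≤ 1) (z : Z) :
    ∃ f, (‖T f‖ ≤ 1 ∧ Λ f = y) ∧ ‖Q u₀‖ ^ 2 * (1 - ‖T f₀‖ ^ 2) ≤ ‖Q f - z‖ ^ 2 := by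
  set r := √(1 - ‖T f₀‖ ^ 2)
  have hr : r ^ 2 = 1 - ‖T f₀‖ ^ 2 :=
    Real.sq_sqrt (by nlinarith [norm_nonneg (T f₀)])
  have hfeas : ∀ s : ℝ, s ^ 2 = r ^ 2 → ‖T (f₀ + s • u₀)‖ ≤ 1 ∧ Λ (f₀ + s • u₀) = y := by
    intro s hs
    refine ⟨?_, by simp [hf₀Λ, LinearMap.mem_ker.1 hu₀]⟩
    have hpyth := norm_map_add_sq hf₀ (Submodule.smul_mem _ s hu₀)
    rw [map_smul, norm_smul, mul_pow, Real.norm_eq_abs, sq_abs, hs, hr] at hpyth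
    refine (sq_le_one_iff₀ (norm_nonneg _)).1 ?_
    have hTu₀sq : ‖T u₀‖ ^ 2 ≤ 1 := pow_le_one₀ (norm_nonneg _) hTu₀
    nlinarith [mul_nonneg (sub_nonneg.2 hTu₀sq) (hr ▸ sq_nonneg r)]
  have hv : ‖r • Q u₀‖ ^ 2 = ‖Q u₀‖ ^ 2 * (1 - ‖T f₀‖ ^ 2) := by
    rw [norm_smul, mul_pow, Real.norm_eq_abs, sq_abs, hr, mul_comm]
  rcases norm_le_norm_add_or_norm_le_norm_sub (Q f₀ - z) (r • Q u₀) with hle | hle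
  · refine ⟨f₀ + r • u₀, hfeas r rfl, ?_⟩
    rw [← hv, map_add, map_smul, add_sub_right_comm]
    exact pow_le_pow_left₀ (norm_nonneg _) hle 2
  · refine ⟨f₀ + (-r) • u₀, hfeas (-r) (neg_sq r), ?_⟩
    rw [← hv, map_add, map_smul, neg_smul, ← sub_eq_add_neg, sub_right_comm]
    exact pow_le_pow_left₀ (norm_nonneg _) hle 2

theorem chebyshevRadius_sq_eq (hf₀Λ : Λ f₀ = y) (hf₀ : ∀ h ∈ ker Λ, ⟪T f₀, T h⟫ = 0)
    (hf₀1 : ‖T f₀‖ ≤ 1) (hu₀ : u₀ ∈ ker Λ) (hTu₀ : ‖T u₀‖ ≤ 1)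
    (hmax : ∀ h ∈ ker Λ, ‖Q h‖ ≤ ‖Q u₀‖ * ‖T h‖) :
    (⨅ z : Z, ⨆ f ∈ {f : F | ‖T f‖ ≤ 1 ∧ Λ f = y}, ENNReal.ofReal (‖Q f - z‖ ^ 2)) =
      ENNReal.ofReal (‖Q u₀‖ ^ 2 * (1 - ‖T f₀‖ ^ 2)) := by
  refine le_antisymm (iInf_le_of_le (Q f₀) (iSup₂_le fun f hf => ?_)) (le_iInf fun z => ?_)
  · exact ENNReal.ofReal_le_ofReal (norm_sq_map_sub_le hf₀Λ hf₀ hmax hf)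
  · obtain ⟨f, hf, hle⟩ := exists_feasible_le_norm_sq_sub hf₀Λ hf₀ hf₀1 hu₀ hTu₀ z
    exact le_iSup₂_of_le f hf (ENNReal.ofReal_le_ofReal hle)

end ChebyshevRadius

theorem statement12_general
    {F G Z : Type*}
    [NormedAddCommGroup F] [InnerProductSpace ℝ F] [FiniteDimensional ℝ F]
    [NormedAddCommGroup G] [InnerProductSpace ℝ G]
    [NormedAddCommGroup Z] [InnerProductSpace ℝ Z]
    {m : ℕ}
    (T : F →ₗ[ℝ] G) (Qt : F →ₗ[ℝ] Z) (Λ : F →ₗ[ℝ] (Fin m → ℝ))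
    (hker : LinearMap.ker T ⊓ LinearMap.ker Λ = ⊥)
    (y : Fin m → ℝ)
    (hCne : {f : F | ‖T f‖ ≤ 1 ∧ Λ f = y}.Nonempty)
    -- `w = Λ†y` is the minimal-norm solution of `Λ f = y`
    (w : F) (hwΛ : Λ w = y) :
    (⨅ z : Z, ⨆ f ∈ {f : F | ‖T f‖ ≤ 1 ∧ Λ f = y},
        ENNReal.ofReal (‖Qt f - z‖ ^ 2)) =
      ⨅ p : {p : ℝ × ℝ // 0 ≤ p.1 ∧ 0 ≤ p.2 ∧
          (∀ h ∈ LinearMap.ker Λ, ‖Qt h‖ ^ 2 ≤ p.1 * ‖T h‖ ^ 2) ∧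
          (∀ h ∈ LinearMap.ker Λ, ∀ t : ℝ,
            0 ≤ p.1 * ‖T h‖ ^ 2 + 2 * p.1 * t * (inner ℝ (T h) (T w) : ℝ) +
              p.2 * t ^ 2)},
        ENNReal.ofReal ((p : ℝ × ℝ).1 * (1 - ‖T w‖ ^ 2) + (p : ℝ × ℝ).2) := by
  obtain ⟨h₁, hh₁, hperp⟩ := exists_mem_forall_inner_map_sub_eq_zero T (ker Λ) w
  obtain ⟨u₀, hu₀, hTu₀, hmax⟩ := exists_mem_forall_norm_le_mul_norm Qt hker
  have hΛ : Λ (w - h₁) = y := by rw [map_sub, hwΛ, LinearMap.mem_ker.1 hh₁, sub_zero]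
  have hr : ‖T (w - h₁)‖ ≤ 1 := by
    obtain ⟨f, hf, hfΛ⟩ := hCne
    have hu : f - (w - h₁) ∈ ker Λ := by simp [hfΛ, hΛ]
    exact (norm_map_le_norm_map_add hperp hu).trans (by rwa [add_sub_cancel])
  rw [chebyshevRadius_sq_eq hΛ hperp hr hu₀ hTu₀ hmax]
  refine le_antisymm (le_iInf fun ⟨(a, b), ha, _, h1, h2⟩ =>
    ENNReal.ofReal_le_ofReal (le_objective_of_feasible hh₁ hperp hr hu₀ hTu₀ ha h1 h2)) ?_
  have ha : 0 ≤ ‖Qt u₀‖ ^ 2 := sq_nonneg _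
  refine iInf_le_of_le ⟨(‖Qt u₀‖ ^ 2, ‖Qt u₀‖ ^ 2 * ‖T h₁‖ ^ 2), ha, by positivity,
    fun h hh => by simpa [mul_pow] using pow_le_pow_left₀ (norm_nonneg _) (hmax h hh) 2,
    fun h hh => mul_norm_sq_add_inner_add_mul_sq_nonneg hperp ha hh⟩ (le_of_eq ?_)
  rw [norm_map_sq_eq_of_forall_inner_map_sub_eq_zero hh₁ hperp]
  congr 1
  ring

/-- semidefinite characterization of the squared Chebyshev radius in
the one-hyperellipsoid case: it equals the infimum of `a(1 − ‖TΛ†y‖²) + b` over all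
`a, b ≥ 0` satisfying the two quadratic-form constraints. -/
theorem statement12
    {F G Z : Type*}
    [NormedAddCommGroup F] [InnerProductSpace ℝ F] [FiniteDimensional ℝ F]
    [NormedAddCommGroup G] [InnerProductSpace ℝ G] [FiniteDimensional ℝ G]
    [NormedAddCommGroup Z] [InnerProductSpace ℝ Z] [FiniteDimensional ℝ Z]
    {m : ℕ}
    (T : F →ₗ[ℝ] G) (Qt : F →ₗ[ℝ] Z) (Λ : F →ₗ[ℝ] (Fin m → ℝ))
    (hker : LinearMap.ker T ⊓ LinearMap.ker Λ = ⊥)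
    (y : Fin m → ℝ)
    (hCne : {f : F | ‖T f‖ ≤ 1 ∧ Λ f = y}.Nonempty)
    -- `w = Λ†y` is the minimal-norm solution of `Λ f = y`
    (w : F) (hwmem : w ∈ (LinearMap.ker Λ)ᗮ) (hwΛ : Λ w = y) :
    (⨅ z : Z, ⨆ f ∈ {f : F | ‖T f‖ ≤ 1 ∧ Λ f = y},
        ENNReal.ofReal (‖Qt f - z‖ ^ 2)) =
      ⨅ p : {p : ℝ × ℝ // 0 ≤ p.1 ∧ 0 ≤ p.2 ∧
          (∀ h ∈ LinearMap.ker Λ, ‖Qt h‖ ^ 2 ≤ p.1 * ‖T h‖ ^ 2) ∧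
          (∀ h ∈ LinearMap.ker Λ, ∀ t : ℝ,
            0 ≤ p.1 * ‖T h‖ ^ 2 + 2 * p.1 * t * (inner ℝ (T h) (T w) : ℝ) +
              p.2 * t ^ 2)},
        ENNReal.ofReal ((p : ℝ × ℝ).1 * (1 - ‖T w‖ ^ 2) + (p : ℝ × ℝ).2) :=
  statement12_general T Qt Λ hker y hCne w hwΛ
end

section
/- Assume ker R ∩ ker S ∩ N = {0} and that there is a choice τ ↦ h^τ of normalized maximizers that is differentiable on (0,1) with Q̃ h^τ ≠ 0 for all τ. Then the function H(τ) = 1/λ(τ) is differentiable on (0,1) with H'(τ) = (‖S h^τ‖² − ‖R h^τ‖²)/‖Q̃ h^τ‖². Consequently, if τ^y ∈ (0,1) minimizes τ ↦ ‖Q̃ h^τ‖² over (0,1), then ‖R f^{τ^y}‖² + ‖R h^{τ^y}‖² = 1 and ‖S f^{τ^y}‖² + ‖S h^{τ^y}‖² = 1. -/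
/-!
Write `E_σ g = (1 - σ)‖R g‖² + σ‖S g‖²` and `q(σ) = ‖Q̃ h^σ‖²`. Since `h^τ` is admissible in the
maximization defining `λ(σ)`, the function `1/λ = E_σ(h^σ)/q(σ)` lies below the affine function
`σ ↦ E_σ(h^τ)/q(τ)` and touches it at `τ`; a differentiable function touching a differentiable
one from below has the same derivative there, which gives `H'`. At a minimizer `τ^y` of `q`, the
normalization makes `σ ↦ E_σ(f^σ) = 1 - q(σ) H(σ)` differentiable with derivative
`‖R h‖² - ‖S h‖²`, while minimality of `f^σ` puts it below the affine `σ ↦ E_σ(f^{τ^y})`, touching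
at `τ^y`. Comparing derivatives gives `‖R f‖² + ‖R h‖² = ‖S f‖² + ‖S h‖²`, and the normalization
fixes the common value to `1`.
-/

open Filter Topology Set

theorem HasDerivAt.eq_of_eventuallyLE_of_eq {f g : ℝ → ℝ} {f' g' x : ℝ}
    (hf : HasDerivAt f f' x) (hg : HasDerivAt g g' x) (hle : f ≤ᶠ[𝓝 x] g) (heq : f x = g x) :
    f' = g' := by
  have hmin : IsLocalMin (fun y => g y - f y) x := by
    filter_upwards [hle] with y hy
    simp only [heq, sub_self, sub_nonneg]
    exact hy
  linarith [hmin.hasDerivAt_eq_zero (hg.sub hf)]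

section MixedEnergy

variable {F G₁ G₂ Z : Type*} [NormedAddCommGroup F] [NormedSpace ℝ F]
  [NormedAddCommGroup G₁] [InnerProductSpace ℝ G₁] [NormedAddCommGroup G₂] [InnerProductSpace ℝ G₂]
  [NormedAddCommGroup Z] [InnerProductSpace ℝ Z]

def mixedEnergy (R : F →ₗ[ℝ] G₁) (S : F →ₗ[ℝ] G₂) (σ : ℝ) (g : F) : ℝ :=
  (1 - σ) * ‖R g‖ ^ 2 + σ * ‖S g‖ ^ 2

variable (R : F →ₗ[ℝ] G₁) (S : F →ₗ[ℝ] G₂) (Q : F →ₗ[ℝ] Z)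

theorem mixedEnergy_nonneg {σ : ℝ} (hσ : σ ∈ Icc 0 1) (g : F) : 0 ≤ mixedEnergy R S σ g :=
  add_nonneg (mul_nonneg (sub_nonneg.2 hσ.2) (sq_nonneg _)) (mul_nonneg hσ.1 (sq_nonneg _))

theorem hasDerivAt_mixedEnergy (g : F) (τ : ℝ) :
    HasDerivAt (fun σ => mixedEnergy R S σ g) (‖S g‖ ^ 2 - ‖R g‖ ^ 2) τ := by
  unfold mixedEnergy
  exact ((((hasDerivAt_id τ).const_sub 1).mul_const (‖R g‖ ^ 2)).add
    ((hasDerivAt_id τ).mul_const (‖S g‖ ^ 2))).congr_deriv (by ring)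

theorem one_div_eq_mixedEnergy_div {σ l : ℝ} {g : F} (hQ : Q g ≠ 0)
    (hattain : ‖Q g‖ ^ 2 = l * mixedEnergy R S σ g) :
    1 / l = mixedEnergy R S σ g / ‖Q g‖ ^ 2 := by
  have hq : ‖Q g‖ ^ 2 ≠ 0 := by positivity
  have hl : l ≠ 0 := by rintro rfl; simp_all
  field_simp
  exact hattain

theorem one_div_le_mixedEnergy_div {σ l : ℝ} (hσ : σ ∈ Icc 0 1) {g : F} (hQ : Q g ≠ 0)
    (hub : ‖Q g‖ ^ 2 ≤ l * mixedEnergy R S σ g) :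
    1 / l ≤ mixedEnergy R S σ g / ‖Q g‖ ^ 2 := by
  have hq : 0 < ‖Q g‖ ^ 2 := by positivity
  have hl : 0 < l := pos_of_mul_pos_left (hq.trans_le hub) (mixedEnergy_nonneg R S hσ g)
  rw [div_le_div_iff₀ hl hq, one_mul, mul_comm]
  exact hub

variable {lam : ℝ → ℝ} {h : ℝ → F} {τ : ℝ}

theorem norm_sq_add_eq_of_hasDerivAt_zero {f : ℝ → F} (hτ : τ ∈ Ioo 0 1)
    (hH : HasDerivAt (fun σ => 1 / lam σ) ((‖S (h τ)‖ ^ 2 - ‖R (h τ)‖ ^ 2) / ‖Q (h τ)‖ ^ 2) τ)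
    (hq : HasDerivAt (fun σ => ‖Q (h σ)‖ ^ 2) 0 τ)
    (hQ : ∀ σ ∈ Ioo (0 : ℝ) 1, Q (h σ) ≠ 0)
    (hattain : ∀ σ ∈ Ioo (0 : ℝ) 1, ‖Q (h σ)‖ ^ 2 = lam σ * mixedEnergy R S σ (h σ))
    (hnorm : ∀ σ ∈ Ioo (0 : ℝ) 1, mixedEnergy R S σ (h σ) = 1 - mixedEnergy R S σ (f σ))
    (hf : ∀ σ ∈ Ioo (0 : ℝ) 1, mixedEnergy R S σ (f σ) ≤ mixedEnergy R S σ (f τ)) :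
    ‖R (f τ)‖ ^ 2 + ‖R (h τ)‖ ^ 2 = ‖S (f τ)‖ ^ 2 + ‖S (h τ)‖ ^ 2 := by
  have hqH : HasDerivAt (fun σ => 1 - ‖Q (h σ)‖ ^ 2 * (1 / lam σ))
      (‖R (h τ)‖ ^ 2 - ‖S (h τ)‖ ^ 2) τ := by
    refine ((hq.mul hH).const_sub 1).congr_deriv ?_
    field_simp [hQ τ hτ]
    ring
  have hfσ : (fun σ => 1 - ‖Q (h σ)‖ ^ 2 * (1 / lam σ)) =ᶠ[𝓝 τ]
      fun σ => mixedEnergy R S σ (f σ) := by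
    filter_upwards [isOpen_Ioo.mem_nhds hτ] with σ hσ
    rw [one_div_eq_mixedEnergy_div R S Q (hQ σ hσ) (hattain σ hσ),
      mul_div_cancel₀ _ (by simpa using hQ σ hσ), hnorm σ hσ, sub_sub_cancel]
  have hle : (fun σ => mixedEnergy R S σ (f σ)) ≤ᶠ[𝓝 τ] fun σ => mixedEnergy R S σ (f τ) :=
    eventually_of_mem (isOpen_Ioo.mem_nhds hτ) hf
  have hderiv := (hqH.congr_of_eventuallyEq hfσ.symm).eq_of_eventuallyLE_of_eq
    (hasDerivAt_mixedEnergy R S (f τ) τ) hle rfl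
  linarith

variable [FiniteDimensional ℝ F]

theorem DifferentiableAt.norm_sq_linearMap {L : F →ₗ[ℝ] Z} (hh : DifferentiableAt ℝ h τ) :
    DifferentiableAt ℝ (fun σ => ‖L (h σ)‖ ^ 2) τ :=
  (L.toContinuousLinearMap.differentiableAt.comp τ hh).norm_sq ℝ

theorem DifferentiableAt.mixedEnergy (hh : DifferentiableAt ℝ h τ) :
    DifferentiableAt ℝ (fun σ => mixedEnergy R S σ (h σ)) τ :=
  ((differentiableAt_const 1).sub differentiableAt_id |>.mul hh.norm_sq_linearMap).add
    (differentiableAt_id.mul hh.norm_sq_linearMap)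

theorem hasDerivAt_one_div_of_maximizer (hτ : τ ∈ Ioo 0 1) (hh : DifferentiableAt ℝ h τ)
    (hQ : ∀ σ ∈ Ioo (0 : ℝ) 1, Q (h σ) ≠ 0)
    (hub : ∀ σ ∈ Ioo (0 : ℝ) 1, ‖Q (h τ)‖ ^ 2 ≤ lam σ * mixedEnergy R S σ (h τ))
    (hattain : ∀ σ ∈ Ioo (0 : ℝ) 1, ‖Q (h σ)‖ ^ 2 = lam σ * mixedEnergy R S σ (h σ)) :
    HasDerivAt (fun σ => 1 / lam σ) ((‖S (h τ)‖ ^ 2 - ‖R (h τ)‖ ^ 2) / ‖Q (h τ)‖ ^ 2) τ := by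
  set φ := fun σ => mixedEnergy R S σ (h σ) / ‖Q (h σ)‖ ^ 2
  have hφ : HasDerivAt φ (deriv φ τ) τ :=
    ((hh.mixedEnergy R S).div hh.norm_sq_linearMap (by simpa using hQ τ hτ)).hasDerivAt
  have hH : (fun σ => 1 / lam σ) =ᶠ[𝓝 τ] φ := by
    filter_upwards [isOpen_Ioo.mem_nhds hτ] with σ hσ
    exact one_div_eq_mixedEnergy_div R S Q (hQ σ hσ) (hattain σ hσ)
  have hle : φ ≤ᶠ[𝓝 τ] fun σ => mixedEnergy R S σ (h τ) / ‖Q (h τ)‖ ^ 2 := by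
    filter_upwards [isOpen_Ioo.mem_nhds hτ] with σ hσ
    calc φ σ = 1 / lam σ := (one_div_eq_mixedEnergy_div R S Q (hQ σ hσ) (hattain σ hσ)).symm
      _ ≤ _ := one_div_le_mixedEnergy_div R S Q (Ioo_subset_Icc_self hσ) (hQ τ hτ) (hub σ hσ)
  have hderiv := hφ.eq_of_eventuallyLE_of_eq ((hasDerivAt_mixedEnergy R S _ τ).div_const _) hle rfl
  exact hderiv ▸ hφ.congr_of_eventuallyEq hH

end MixedEnergy

theorem statement15_general
    {F GR GS Z : Type*}
    [NormedAddCommGroup F] [InnerProductSpace ℝ F] [FiniteDimensional ℝ F]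
    [NormedAddCommGroup GR] [InnerProductSpace ℝ GR]
    [NormedAddCommGroup GS] [InnerProductSpace ℝ GS]
    [NormedAddCommGroup Z] [InnerProductSpace ℝ Z]
    {m : ℕ}
    (R : F →ₗ[ℝ] GR) (S : F →ₗ[ℝ] GS) (Qt : F →ₗ[ℝ] Z) (Λ : F →ₗ[ℝ] (Fin m → ℝ))
    (y : Fin m → ℝ)
    -- constrained regularizers
    (fτ : ℝ → F)
    (hfτ : ∀ σ ∈ Set.Ioo (0 : ℝ) 1, Λ (fτ σ) = y ∧
      ∀ g : F, Λ g = y →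
        (1 - σ) * ‖R (fτ σ)‖ ^ 2 + σ * ‖S (fτ σ)‖ ^ 2 ≤
          (1 - σ) * ‖R g‖ ^ 2 + σ * ‖S g‖ ^ 2)
    -- `lam σ = λ(σ)` with a differentiable selection `hfun σ` of normalized maximizers
    (lam : ℝ → ℝ) (hfun : ℝ → F)
    (hmem : ∀ σ ∈ Set.Ioo (0 : ℝ) 1, hfun σ ∈ LinearMap.ker Λ)
    (hub : ∀ σ ∈ Set.Ioo (0 : ℝ) 1, ∀ g ∈ LinearMap.ker Λ,
      ‖Qt g‖ ^ 2 ≤ lam σ * ((1 - σ) * ‖R g‖ ^ 2 + σ * ‖S g‖ ^ 2))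
    (hattain : ∀ σ ∈ Set.Ioo (0 : ℝ) 1,
      ‖Qt (hfun σ)‖ ^ 2 = lam σ * ((1 - σ) * ‖R (hfun σ)‖ ^ 2 + σ * ‖S (hfun σ)‖ ^ 2))
    (hnorm : ∀ σ ∈ Set.Ioo (0 : ℝ) 1,
      (1 - σ) * ‖R (hfun σ)‖ ^ 2 + σ * ‖S (hfun σ)‖ ^ 2 =
        1 - ((1 - σ) * ‖R (fτ σ)‖ ^ 2 + σ * ‖S (fτ σ)‖ ^ 2))
    (hdiff : ∀ σ ∈ Set.Ioo (0 : ℝ) 1, DifferentiableAt ℝ hfun σ)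
    (hQne : ∀ σ ∈ Set.Ioo (0 : ℝ) 1, Qt (hfun σ) ≠ 0) :
    (∀ τ ∈ Set.Ioo (0 : ℝ) 1,
      HasDerivAt (fun σ => 1 / lam σ)
        ((‖S (hfun τ)‖ ^ 2 - ‖R (hfun τ)‖ ^ 2) / ‖Qt (hfun τ)‖ ^ 2) τ) ∧
    ∀ τy ∈ Set.Ioo (0 : ℝ) 1,
      (∀ σ ∈ Set.Ioo (0 : ℝ) 1, ‖Qt (hfun τy)‖ ^ 2 ≤ ‖Qt (hfun σ)‖ ^ 2) →
      ‖R (fτ τy)‖ ^ 2 + ‖R (hfun τy)‖ ^ 2 = 1 ∧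
        ‖S (fτ τy)‖ ^ 2 + ‖S (hfun τy)‖ ^ 2 = 1 := by
  have hH : ∀ τ ∈ Ioo (0 : ℝ) 1, HasDerivAt (fun σ => 1 / lam σ)
      ((‖S (hfun τ)‖ ^ 2 - ‖R (hfun τ)‖ ^ 2) / ‖Qt (hfun τ)‖ ^ 2) τ := fun τ hτ =>
    hasDerivAt_one_div_of_maximizer R S Qt hτ (hdiff τ hτ) hQne
      (fun σ hσ => hub σ hσ _ (hmem τ hτ)) hattain
  refine ⟨hH, fun τy hτy hmin => ?_⟩
  have hqmin : IsLocalMin (fun σ => ‖Qt (hfun σ)‖ ^ 2) τy :=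
    eventually_of_mem (isOpen_Ioo.mem_nhds hτy) hmin
  have hq : HasDerivAt (fun σ => ‖Qt (hfun σ)‖ ^ 2) 0 τy :=
    hqmin.deriv_eq_zero ▸ (hdiff τy hτy).norm_sq_linearMap.hasDerivAt
  have hbalance := norm_sq_add_eq_of_hasDerivAt_zero R S Qt hτy (hH τy hτy) hq hQne hattain hnorm
    fun σ hσ => (hfτ σ hσ).2 _ (hfτ τy hτy).1
  have hn := hnorm τy hτy
  constructor
  · linear_combination hn + τy * hbalance
  · linear_combination hn + (τy - 1) * hbalance

/-- The function `H(τ) = 1/λ(τ)` is differentiable on `(0,1)` with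
derivative `H'(τ) = (‖S h^τ‖² − ‖R h^τ‖²)/‖Q̃ h^τ‖²`; consequently, at a minimizer
`τ^y` of `τ ↦ ‖Q̃ h^τ‖²` one has `‖R f^{τ^y}‖² + ‖R h^{τ^y}‖² = 1` and
`‖S f^{τ^y}‖² + ‖S h^{τ^y}‖² = 1`. -/
theorem statement15
    {F GR GS Z : Type*}
    [NormedAddCommGroup F] [InnerProductSpace ℝ F] [FiniteDimensional ℝ F]
    [NormedAddCommGroup GR] [InnerProductSpace ℝ GR] [FiniteDimensional ℝ GR]
    [NormedAddCommGroup GS] [InnerProductSpace ℝ GS] [FiniteDimensional ℝ GS]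
    [NormedAddCommGroup Z] [InnerProductSpace ℝ Z] [FiniteDimensional ℝ Z]
    {m : ℕ}
    (R : F →ₗ[ℝ] GR) (S : F →ₗ[ℝ] GS) (Qt : F →ₗ[ℝ] Z) (Λ : F →ₗ[ℝ] (Fin m → ℝ))
    (hker : LinearMap.ker R ⊓ LinearMap.ker S ⊓ LinearMap.ker Λ = ⊥)
    (y : Fin m → ℝ) (hy : ∃ f : F, Λ f = y)
    -- constrained regularizers
    (fτ : ℝ → F)
    (hfτ : ∀ σ ∈ Set.Ioo (0 : ℝ) 1, Λ (fτ σ) = y ∧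
      ∀ g : F, Λ g = y →
        (1 - σ) * ‖R (fτ σ)‖ ^ 2 + σ * ‖S (fτ σ)‖ ^ 2 ≤
          (1 - σ) * ‖R g‖ ^ 2 + σ * ‖S g‖ ^ 2)
    -- `lam σ = λ(σ)` with a differentiable selection `hfun σ` of normalized maximizers
    (lam : ℝ → ℝ) (hfun : ℝ → F)
    (hmem : ∀ σ ∈ Set.Ioo (0 : ℝ) 1, hfun σ ∈ LinearMap.ker Λ)
    (hub : ∀ σ ∈ Set.Ioo (0 : ℝ) 1, ∀ g ∈ LinearMap.ker Λ,
      ‖Qt g‖ ^ 2 ≤ lam σ * ((1 - σ) * ‖R g‖ ^ 2 + σ * ‖S g‖ ^ 2))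
    (hattain : ∀ σ ∈ Set.Ioo (0 : ℝ) 1,
      ‖Qt (hfun σ)‖ ^ 2 = lam σ * ((1 - σ) * ‖R (hfun σ)‖ ^ 2 + σ * ‖S (hfun σ)‖ ^ 2))
    (hnorm : ∀ σ ∈ Set.Ioo (0 : ℝ) 1,
      (1 - σ) * ‖R (hfun σ)‖ ^ 2 + σ * ‖S (hfun σ)‖ ^ 2 =
        1 - ((1 - σ) * ‖R (fτ σ)‖ ^ 2 + σ * ‖S (fτ σ)‖ ^ 2))
    (hdiff : ∀ σ ∈ Set.Ioo (0 : ℝ) 1, DifferentiableAt ℝ hfun σ)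
    (hQne : ∀ σ ∈ Set.Ioo (0 : ℝ) 1, Qt (hfun σ) ≠ 0) :
    (∀ τ ∈ Set.Ioo (0 : ℝ) 1,
      HasDerivAt (fun σ => 1 / lam σ)
        ((‖S (hfun τ)‖ ^ 2 - ‖R (hfun τ)‖ ^ 2) / ‖Qt (hfun τ)‖ ^ 2) τ) ∧
    ∀ τy ∈ Set.Ioo (0 : ℝ) 1,
      (∀ σ ∈ Set.Ioo (0 : ℝ) 1, ‖Qt (hfun τy)‖ ^ 2 ≤ ‖Qt (hfun σ)‖ ^ 2) →
      ‖R (fτ τy)‖ ^ 2 + ‖R (hfun τy)‖ ^ 2 = 1 ∧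
        ‖S (fτ τy)‖ ^ 2 + ‖S (hfun τy)‖ ^ 2 = 1 :=
  statement15_general R S Qt Λ y fτ hfτ lam hfun hmem hub hattain hnorm hdiff hQne
end

section
/- Suppose ker Λ_0 ⊆ ker P_1 or ker Λ_0 ⊆ ker Λ_1, suppose the joint-kernel condition [P_0 f_0 = 0, P_1(f_0 − f_1) = 0, Λ_0 f_0 = 0, Λ_1 f_1 = 0 imply f_0 = 0 and f_1 = 0] holds, and suppose the feasible set { (f_0,f_1) : ‖P_0 f_0‖ ≤ ε_0, ‖P_1(f_0 − f_1)‖ ≤ ε_1, Λ_0 f_0 = y_0, Λ_1 f_1 = y_1 } is nonempty. Let (b^y, c_0^y, c_1^y) with b^y, c_0^y, c_1^y ≥ 0 and c_0^y + c_1^y > 0 minimize c_0 (ε_0² − ‖u_0‖²) + c_1 (ε_1² − ‖u_1‖²) + b subject to: (1) c_0 ‖P_0 h_0‖² + c_1 ‖P_1(h_0 − h_1)‖² ≥ ‖Q h_0‖² for all h_0 ∈ N_0, h_1 ∈ N_1; and (2) c_0 ‖P_0 h_0‖² + c_1 ‖P_1(h_0 − h_1)‖² + 2t (c_0 ⟨P_0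 h_0, u_0⟩ + c_1 ⟨P_1(h_0 − h_1), u_1⟩) + t² b ≥ 0 for all h_0 ∈ N_0, h_1 ∈ N_1, t ∈ ℝ. Set τ^y = c_1^y/(c_0^y + c_1^y). Then Q(f_0^{τ^y}) minimizes the local worst-case error: lwce_y(Q f_0^{τ^y}) ≤ lwce_y(z) for every z ∈ Z. -/
/-!
Because every shift of `f₀` inside `ker Λ₀` can be compensated by a shift of `f₁` inside
`ker Λ₁` that leaves `P₁ (f₀ - f₁)` unchanged, the regularized solution `f₀^τ` (for `τ < 1`)
minimizes `‖P₀ ·‖` on the affine space `Λ₀ f₀ = y₀`, so `P₀ f₀^τ ⟂ P₀ (ker Λ₀)`. Hence the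
reflection `f₀ ↦ 2 f₀^τ - f₀` (with a matching shift of `f₁`) preserves the feasible set, the
set `Q (feasible)` is symmetric about `Q f₀^τ`, and a center of symmetry is a Chebyshev center.
When `τ = 1`, i.e. `c₀ = 0`, the first SDP constraint forces `Q` to vanish on `ker Λ₀`, so `Q` is
constant on the feasible set.
-/

open scoped ENNReal RealInnerProductSpace

open LinearMap

section Chebyshev

variable {α E : Type*} [NormedAddCommGroup E] [NormedSpace ℝ E]

theorem norm_sub_le_max_of_add_eq_two_smul {a b c : E} (habc : a + b = (2 : ℝ) • c) (z : E) :
    ‖a - c‖ ≤ max ‖a - z‖ ‖b - z‖ := by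
  have hsub : (2 : ℝ) • (a - c) = (a - z) - (b - z) := by
    rw [smul_sub, ← habc]; module
  have htwo : 2 * ‖a - c‖ ≤ ‖a - z‖ + ‖b - z‖ :=
    calc 2 * ‖a - c‖ = ‖(2 : ℝ) • (a - c)‖ := by rw [norm_smul, Real.norm_two]
      _ = ‖(a - z) - (b - z)‖ := by rw [hsub]
      _ ≤ ‖a - z‖ + ‖b - z‖ := norm_sub_le _ _
  linarith [le_max_left ‖a - z‖ ‖b - z‖, le_max_right ‖a - z‖ ‖b - z‖]

theorem iSup_ofReal_norm_sub_le_of_symmetric {S : Set α} {g : α → E} {c : E}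
    (hsymm : ∀ p ∈ S, ∃ q ∈ S, g p + g q = (2 : ℝ) • c) (z : E) :
    ⨆ p ∈ S, ENNReal.ofReal ‖g p - c‖ ≤ ⨆ p ∈ S, ENNReal.ofReal ‖g p - z‖ := by
  refine iSup₂_le fun p hp => ?_
  obtain ⟨q, hq, hpq⟩ := hsymm p hp
  calc ENNReal.ofReal ‖g p - c‖ ≤ ENNReal.ofReal (max ‖g p - z‖ ‖g q - z‖) :=
        ENNReal.ofReal_le_ofReal (norm_sub_le_max_of_add_eq_two_smul hpq z)
    _ = max (ENNReal.ofReal ‖g p - z‖) (ENNReal.ofReal ‖g q - z‖) := ENNReal.ofReal_max _ _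
    _ ≤ ⨆ p ∈ S, ENNReal.ofReal ‖g p - z‖ :=
        max_le (le_iSup₂_of_le p hp le_rfl) (le_iSup₂_of_le q hq le_rfl)

end Chebyshev

theorem real_inner_eq_zero_of_forall_sq_norm_le {G : Type*} [NormedAddCommGroup G]
    [InnerProductSpace ℝ G] {x y : G} (h : ∀ t : ℝ, ‖x‖ ^ 2 ≤ ‖x + t • y‖ ^ 2) : ⟪x, y⟫ = 0 := by
  have hquad : ∀ t : ℝ, 0 ≤ ‖y‖ ^ 2 * (t * t) + 2 * ⟪x, y⟫ * t + 0 := fun t => by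
    have := h t
    rw [norm_add_sq_real, real_inner_smul_right, norm_smul, mul_pow, Real.norm_eq_abs,
      sq_abs] at this
    linarith
  have hdisc := discrim_le_zero hquad
  rw [discrim] at hdisc
  nlinarith [sq_nonneg ⟪x, y⟫]

section TwoFidelity

variable {F G₀ G₁ M₀ M₁ : Type*} [AddCommGroup F] [Module ℝ F]
  [NormedAddCommGroup G₀] [InnerProductSpace ℝ G₀] [NormedAddCommGroup G₁] [NormedSpace ℝ G₁]
  [AddCommGroup M₀] [Module ℝ M₀] [AddCommGroup M₁] [Module ℝ M₁]
  (P₀ : F →ₗ[ℝ] G₀) (P₁ : F →ₗ[ℝ] G₁) (Λ₀ : F →ₗ[ℝ] M₀) (Λ₁ : F →ₗ[ℝ] M₁)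

def feasiblePairs (ε₀ ε₁ : ℝ) (y₀ : M₀) (y₁ : M₁) : Set (F × F) :=
  {p | ‖P₀ p.1‖ ≤ ε₀ ∧ ‖P₁ (p.1 - p.2)‖ ≤ ε₁ ∧ Λ₀ p.1 = y₀ ∧ Λ₁ p.2 = y₁}

variable {P₀ P₁ Λ₀ Λ₁}

theorem ker_le_ker_of_sq_norm_le {Z : Type*} [NormedAddCommGroup Z] [NormedSpace ℝ Z] {Q : F →ₗ[ℝ] Z}
    {c : ℝ} (hsup : ker Λ₀ ≤ ker Λ₁ ⊔ ker P₁)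
    (hQ : ∀ h₀ ∈ ker Λ₀, ∀ h₁ ∈ ker Λ₁, ‖Q h₀‖ ^ 2 ≤ c * ‖P₁ (h₀ - h₁)‖ ^ 2) :
    ker Λ₀ ≤ ker Q := by
  intro h hh
  obtain ⟨h₁, hh₁, k, hk, rfl⟩ := Submodule.mem_sup.1 (hsup hh)
  have hQ0 := hQ _ hh h₁ hh₁
  rw [add_sub_cancel_left, mem_ker.1 hk, norm_zero] at hQ0
  simpa using hQ0

theorem inner_map_eq_zero_of_isMin_regularization {τ : ℝ} (hτ : τ < 1)
    (hsup : ker Λ₀ ≤ ker Λ₁ ⊔ ker P₁) {f₀ f₁ : F}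
    (hmin : ∀ g₀ g₁ : F, Λ₀ g₀ = Λ₀ f₀ → Λ₁ g₁ = Λ₁ f₁ →
      (1 - τ) * ‖P₀ f₀‖ ^ 2 + τ * ‖P₁ (f₀ - f₁)‖ ^ 2 ≤
        (1 - τ) * ‖P₀ g₀‖ ^ 2 + τ * ‖P₁ (g₀ - g₁)‖ ^ 2)
    {h : F} (hh : h ∈ ker Λ₀) : ⟪P₀ f₀, P₀ h⟫ = 0 := by
  obtain ⟨h₁, hh₁, k, hk, rfl⟩ := Submodule.mem_sup.1 (hsup hh)
  refine real_inner_eq_zero_of_forall_sq_norm_le fun t => ?_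
  have hm := hmin (f₀ + t • (h₁ + k)) (f₁ + t • h₁) (by rw [map_add, map_smul, mem_ker.1 hh, smul_zero, add_zero])
    (by rw [map_add, map_smul, mem_ker.1 hh₁, smul_zero, add_zero])
  have hP₁ : P₁ (f₀ + t • (h₁ + k) - (f₁ + t • h₁)) = P₁ (f₀ - f₁) := by
    rw [show f₀ + t • (h₁ + k) - (f₁ + t • h₁) = (f₀ - f₁) + t • k by module, map_add, map_smul,
      mem_ker.1 hk, smul_zero, add_zero]
  rw [hP₁, add_le_add_iff_right, map_add, map_smul] at hm
  exact le_of_mul_le_mul_left hm (sub_pos.2 hτ)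

theorem exists_reflection_mem_feasiblePairs (hsup : ker Λ₀ ≤ ker Λ₁ ⊔ ker P₁) {f₀ : F}
    (horth : ∀ h ∈ ker Λ₀, ⟪P₀ f₀, P₀ h⟫ = 0) {ε₀ ε₁ : ℝ} {y₀ : M₀} {y₁ : M₁}
    (hf₀ : Λ₀ f₀ = y₀) {p : F × F} (hp : p ∈ feasiblePairs P₀ P₁ Λ₀ Λ₁ ε₀ ε₁ y₀ y₁) :
    ∃ q ∈ feasiblePairs P₀ P₁ Λ₀ Λ₁ ε₀ ε₁ y₀ y₁, p.1 + q.1 = (2 : ℝ) • f₀ := by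
  obtain ⟨hp₀, hp₁, hpΛ₀, hpΛ₁⟩ := hp
  have ha : p.1 - f₀ ∈ ker Λ₀ := by simp [hpΛ₀, hf₀]
  obtain ⟨h₁, hh₁, k, hk, hsum⟩ := Submodule.mem_sup.1 (hsup ha)
  refine ⟨((2 : ℝ) • f₀ - p.1, p.2 - (2 : ℝ) • h₁), ⟨?_, ?_, ?_, ?_⟩, by module⟩
  · calc ‖P₀ ((2 : ℝ) • f₀ - p.1)‖ = ‖P₀ f₀ - P₀ (p.1 - f₀)‖ := by
          rw [← map_sub]; congr 2; module
      _ = ‖P₀ f₀ + P₀ (p.1 - f₀)‖ :=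
          norm_sub_eq_norm_add ((real_inner_comm _ _).trans (horth _ ha))
      _ = ‖P₀ p.1‖ := by rw [← map_add, add_sub_cancel]
      _ ≤ ε₀ := hp₀
  · have hk' : k = p.1 - f₀ - h₁ := eq_sub_of_add_eq' hsum
    rw [show (2 : ℝ) • f₀ - p.1 - (p.2 - (2 : ℝ) • h₁) = (p.1 - p.2) - (2 : ℝ) • k by
      rw [hk']; module, map_sub, map_smul, mem_ker.1 hk, smul_zero, sub_zero]
    exact hp₁
  · rw [map_sub, map_smul, hf₀, hpΛ₀, two_smul, add_sub_cancel_right]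
  · rw [map_sub, map_smul, mem_ker.1 hh₁, smul_zero, sub_zero, hpΛ₁]

end TwoFidelity

theorem statement16_general
    {F Z G₀ G₁ : Type*}
    [NormedAddCommGroup F] [InnerProductSpace ℝ F]
    [NormedAddCommGroup Z] [InnerProductSpace ℝ Z]
    [NormedAddCommGroup G₀] [InnerProductSpace ℝ G₀]
    [NormedAddCommGroup G₁] [InnerProductSpace ℝ G₁]
    {m₀ m₁ : ℕ}
    (P₀ : F →ₗ[ℝ] G₀) (P₁ : F →ₗ[ℝ] G₁) (Q : F →ₗ[ℝ] Z)
    (Λ₀ : F →ₗ[ℝ] (Fin m₀ → ℝ)) (Λ₁ : F →ₗ[ℝ] (Fin m₁ → ℝ))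
    (ε₀ ε₁ : ℝ)
    (hker : LinearMap.ker Λ₀ ≤ LinearMap.ker P₁ ∨
      LinearMap.ker Λ₀ ≤ LinearMap.ker Λ₁)
    (y₀ : Fin m₀ → ℝ) (y₁ : Fin m₁ → ℝ)
    -- `(b, c₀, c₁)` solves the semidefinite program
    (c₀ c₁ : ℝ) (hc₀ : 0 ≤ c₀) (hcpos : 0 < c₀ + c₁)
    (hsdp1 : ∀ h₀ ∈ LinearMap.ker Λ₀, ∀ h₁ ∈ LinearMap.ker Λ₁,
      ‖Q h₀‖ ^ 2 ≤ c₀ * ‖P₀ h₀‖ ^ 2 + c₁ * ‖P₁ (h₀ - h₁)‖ ^ 2)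
    -- the constrained regularizer with parameter `τ^y = c₁/(c₀+c₁)`
    (f₀τ f₁τ : F) (hf₀τ : Λ₀ f₀τ = y₀) (hf₁τ : Λ₁ f₁τ = y₁)
    (hτmin : ∀ g₀ g₁ : F, Λ₀ g₀ = y₀ → Λ₁ g₁ = y₁ →
      (1 - c₁ / (c₀ + c₁)) * ‖P₀ f₀τ‖ ^ 2 +
          (c₁ / (c₀ + c₁)) * ‖P₁ (f₀τ - f₁τ)‖ ^ 2 ≤
        (1 - c₁ / (c₀ + c₁)) * ‖P₀ g₀‖ ^ 2 +
          (c₁ / (c₀ + c₁)) * ‖P₁ (g₀ - g₁)‖ ^ 2) :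
    ∀ z : Z,
      (⨆ p ∈ {p : F × F | ‖P₀ p.1‖ ≤ ε₀ ∧ ‖P₁ (p.1 - p.2)‖ ≤ ε₁ ∧
          Λ₀ p.1 = y₀ ∧ Λ₁ p.2 = y₁},
        ENNReal.ofReal ‖Q p.1 - Q f₀τ‖) ≤
      ⨆ p ∈ {p : F × F | ‖P₀ p.1‖ ≤ ε₀ ∧ ‖P₁ (p.1 - p.2)‖ ≤ ε₁ ∧
          Λ₀ p.1 = y₀ ∧ Λ₁ p.2 = y₁},
        ENNReal.ofReal ‖Q p.1 - z‖ := by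
  intro z
  have hsup : ker Λ₀ ≤ ker Λ₁ ⊔ ker P₁ := hker.elim le_sup_of_le_right le_sup_of_le_left
  refine iSup_ofReal_norm_sub_le_of_symmetric (S := feasiblePairs P₀ P₁ Λ₀ Λ₁ ε₀ ε₁ y₀ y₁)
    (g := fun p => Q p.1) (fun p hp => ?_) z
  rcases hc₀.eq_or_lt with hc₀ | hc₀
  · have hQ : ker Λ₀ ≤ ker Q := ker_le_ker_of_sq_norm_le hsup (c := c₁)
      fun h₀ hh₀ h₁ hh₁ => by simpa [← hc₀] using hsdp1 h₀ hh₀ h₁ hh₁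
    have hQp : Q (p.1 - f₀τ) = 0 := hQ (by simp [hp.2.2.1, hf₀τ])
    rw [map_sub, sub_eq_zero] at hQp
    exact ⟨p, hp, by simp only [hQp, two_smul]⟩
  · have hτ : c₁ / (c₀ + c₁) < 1 := (div_lt_one hcpos).2 (by linarith)
    have horth : ∀ h ∈ ker Λ₀, ⟪P₀ f₀τ, P₀ h⟫ = 0 := fun h =>
      inner_map_eq_zero_of_isMin_regularization hτ hsup
        fun g₀ g₁ hg₀ hg₁ => hτmin g₀ g₁ (hg₀.trans hf₀τ) (hg₁.trans hf₁τ)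
    obtain ⟨q, hq, hpq⟩ := exists_reflection_mem_feasiblePairs hsup horth hf₀τ hp
    exact ⟨q, hq, by simp only [← map_add, hpq, map_smul]⟩

/-- In the multi-fidelity Hilbert setting, under
`ker Λ₀ ⊆ ker P₁` or `ker Λ₀ ⊆ ker Λ₁`, the joint-kernel condition, and nonemptiness
of the feasible set, constrained regularization with the data-dependent parameter
`τ^y = c₁^y/(c₀^y + c₁^y)` obtained from the semidefinite program gives a locally
optimal recovery: `Q f₀^{τ^y}` minimizes the local worst-case error. -/
theorem statement16
    {F Z G₀ G₁ : Type*}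
    [NormedAddCommGroup F] [InnerProductSpace ℝ F] [FiniteDimensional ℝ F]
    [NormedAddCommGroup Z] [InnerProductSpace ℝ Z] [FiniteDimensional ℝ Z]
    [NormedAddCommGroup G₀] [InnerProductSpace ℝ G₀] [FiniteDimensional ℝ G₀]
    [NormedAddCommGroup G₁] [InnerProductSpace ℝ G₁] [FiniteDimensional ℝ G₁]
    {m₀ m₁ : ℕ}
    (P₀ : F →ₗ[ℝ] G₀) (P₁ : F →ₗ[ℝ] G₁) (Q : F →ₗ[ℝ] Z)
    (Λ₀ : F →ₗ[ℝ] (Fin m₀ → ℝ)) (Λ₁ : F →ₗ[ℝ] (Fin m₁ → ℝ))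
    (ε₀ ε₁ : ℝ) (hε₀ : 0 < ε₀) (hε₁ : 0 < ε₁)
    (hker : LinearMap.ker Λ₀ ≤ LinearMap.ker P₁ ∨
      LinearMap.ker Λ₀ ≤ LinearMap.ker Λ₁)
    (hjoint : ∀ f₀ f₁ : F, P₀ f₀ = 0 → P₁ (f₀ - f₁) = 0 → Λ₀ f₀ = 0 → Λ₁ f₁ = 0 →
      f₀ = 0 ∧ f₁ = 0)
    (y₀ : Fin m₀ → ℝ) (y₁ : Fin m₁ → ℝ)
    (hfeas : {p : F × F | ‖P₀ p.1‖ ≤ ε₀ ∧ ‖P₁ (p.1 - p.2)‖ ≤ ε₁ ∧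
      Λ₀ p.1 = y₀ ∧ Λ₁ p.2 = y₁}.Nonempty)
    -- minimal-norm solutions `w₀ = Λ₀†y₀` and `w₁ = Λ₁†y₁`
    (w₀ : F) (hw₀mem : w₀ ∈ (LinearMap.ker Λ₀)ᗮ) (hw₀ : Λ₀ w₀ = y₀)
    (w₁ : F) (hw₁mem : w₁ ∈ (LinearMap.ker Λ₁)ᗮ) (hw₁ : Λ₁ w₁ = y₁)
    -- `(b, c₀, c₁)` solves the semidefinite program
    (b c₀ c₁ : ℝ) (hb : 0 ≤ b) (hc₀ : 0 ≤ c₀) (hc₁ : 0 ≤ c₁) (hcpos : 0 < c₀ + c₁)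
    (hsdp1 : ∀ h₀ ∈ LinearMap.ker Λ₀, ∀ h₁ ∈ LinearMap.ker Λ₁,
      ‖Q h₀‖ ^ 2 ≤ c₀ * ‖P₀ h₀‖ ^ 2 + c₁ * ‖P₁ (h₀ - h₁)‖ ^ 2)
    (hsdp2 : ∀ h₀ ∈ LinearMap.ker Λ₀, ∀ h₁ ∈ LinearMap.ker Λ₁, ∀ t : ℝ,
      0 ≤ c₀ * ‖P₀ h₀‖ ^ 2 + c₁ * ‖P₁ (h₀ - h₁)‖ ^ 2 +
        2 * t * (c₀ * (inner ℝ (P₀ h₀) (P₀ w₀) : ℝ) +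
          c₁ * (inner ℝ (P₁ (h₀ - h₁)) (P₁ (w₀ - w₁)) : ℝ)) + t ^ 2 * b)
    (hmin : ∀ b' c₀' c₁' : ℝ, 0 ≤ b' → 0 ≤ c₀' → 0 ≤ c₁' →
      (∀ h₀ ∈ LinearMap.ker Λ₀, ∀ h₁ ∈ LinearMap.ker Λ₁,
        ‖Q h₀‖ ^ 2 ≤ c₀' * ‖P₀ h₀‖ ^ 2 + c₁' * ‖P₁ (h₀ - h₁)‖ ^ 2) →
      (∀ h₀ ∈ LinearMap.ker Λ₀, ∀ h₁ ∈ LinearMap.ker Λ₁, ∀ t : ℝ,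
        0 ≤ c₀' * ‖P₀ h₀‖ ^ 2 + c₁' * ‖P₁ (h₀ - h₁)‖ ^ 2 +
          2 * t * (c₀' * (inner ℝ (P₀ h₀) (P₀ w₀) : ℝ) +
            c₁' * (inner ℝ (P₁ (h₀ - h₁)) (P₁ (w₀ - w₁)) : ℝ)) + t ^ 2 * b') →
      c₀ * (ε₀ ^ 2 - ‖P₀ w₀‖ ^ 2) + c₁ * (ε₁ ^ 2 - ‖P₁ (w₀ - w₁)‖ ^ 2) + b ≤
        c₀' * (ε₀ ^ 2 - ‖P₀ w₀‖ ^ 2) + c₁' * (ε₁ ^ 2 - ‖P₁ (w₀ - w₁)‖ ^ 2) + b')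
    -- the constrained regularizer with parameter `τ^y = c₁/(c₀+c₁)`
    (f₀τ f₁τ : F) (hf₀τ : Λ₀ f₀τ = y₀) (hf₁τ : Λ₁ f₁τ = y₁)
    (hτmin : ∀ g₀ g₁ : F, Λ₀ g₀ = y₀ → Λ₁ g₁ = y₁ →
      (1 - c₁ / (c₀ + c₁)) * ‖P₀ f₀τ‖ ^ 2 +
          (c₁ / (c₀ + c₁)) * ‖P₁ (f₀τ - f₁τ)‖ ^ 2 ≤
        (1 - c₁ / (c₀ + c₁)) * ‖P₀ g₀‖ ^ 2 +
          (c₁ / (c₀ + c₁)) * ‖P₁ (g₀ - g₁)‖ ^ 2) :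
    ∀ z : Z,
      (⨆ p ∈ {p : F × F | ‖P₀ p.1‖ ≤ ε₀ ∧ ‖P₁ (p.1 - p.2)‖ ≤ ε₁ ∧
          Λ₀ p.1 = y₀ ∧ Λ₁ p.2 = y₁},
        ENNReal.ofReal ‖Q p.1 - Q f₀τ‖) ≤
      ⨆ p ∈ {p : F × F | ‖P₀ p.1‖ ≤ ε₀ ∧ ‖P₁ (p.1 - p.2)‖ ≤ ε₁ ∧
          Λ₀ p.1 = y₀ ∧ Λ₁ p.2 = y₁},
        ENNReal.ofReal ‖Q p.1 - z‖ :=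
  statement16_general P₀ P₁ Q Λ₀ Λ₁ ε₀ ε₁ hker y₀ y₁ c₀ c₁ hc₀ hcpos hsdp1 f₀τ f₁τ hf₀τ hf₁τ hτmin
end

section
/- Suppose ker Λ_0 ⊆ ker P_1 or ker Λ_0 ⊆ ker Λ_1. Then for every τ ∈ (0,1), the constrained minimizer (f_0^τ, f_1^τ) satisfies ⟨P_0 f_0^τ, P_0 h_0⟩ = 0 and ⟨P_1(f_0^τ − f_1^τ), P_1(h_0 − h_1)⟩ = 0 for all h_0 ∈ ker Λ_0 and all h_1 ∈ ker Λ_1. -/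
lemma quad_aux (A B : ℝ) (hB : 0 ≤ B) (h : ∀ t : ℝ, 0 ≤ 2 * t * A + t ^ 2 * B) :
    A = 0 := by
  by_cases hB0 : B = 0
  · subst hB0
    nlinarith [h 1, h (-1)]
  · have hBpos : 0 < B := lt_of_le_of_ne hB (Ne.symm hB0)
    have h1 := h (-A / B)
    have heq : 2 * (-A / B) * A + (-A / B) ^ 2 * B = -A ^ 2 / B := by
      field_simp
      ring
    rw [heq] at h1
    have h2 := mul_nonneg h1 hBpos.le
    rw [div_mul_cancel₀ _ (ne_of_gt hBpos)] at h2
    nlinarith [sq_nonneg A]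

/-- If `ker Λ₀ ⊆ ker P₁` or `ker Λ₀ ⊆ ker Λ₁`, then for every
`τ ∈ (0,1)` the constrained minimizer `(f₀^τ, f₁^τ)` satisfies the two orthogonality
relations `⟨P₀ f₀^τ, P₀ h₀⟩ = 0` and `⟨P₁(f₀^τ − f₁^τ), P₁(h₀ − h₁)⟩ = 0` for all
`h₀ ∈ ker Λ₀`, `h₁ ∈ ker Λ₁`. -/
theorem statement17
    {F G₀ G₁ : Type*}
    [NormedAddCommGroup F] [InnerProductSpace ℝ F] [FiniteDimensional ℝ F]
    [NormedAddCommGroup G₀] [InnerProductSpace ℝ G₀] [FiniteDimensional ℝ G₀]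
    [NormedAddCommGroup G₁] [InnerProductSpace ℝ G₁] [FiniteDimensional ℝ G₁]
    {m₀ m₁ : ℕ}
    (P₀ : F →ₗ[ℝ] G₀) (P₁ : F →ₗ[ℝ] G₁)
    (Λ₀ : F →ₗ[ℝ] (Fin m₀ → ℝ)) (Λ₁ : F →ₗ[ℝ] (Fin m₁ → ℝ))
    (hjoint : ∀ f₀ f₁ : F, P₀ f₀ = 0 → P₁ (f₀ - f₁) = 0 → Λ₀ f₀ = 0 → Λ₁ f₁ = 0 →
      f₀ = 0 ∧ f₁ = 0)
    (hker : LinearMap.ker Λ₀ ≤ LinearMap.ker P₁ ∨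
      LinearMap.ker Λ₀ ≤ LinearMap.ker Λ₁)
    (y₀ : Fin m₀ → ℝ) (y₁ : Fin m₁ → ℝ)
    (hy₀ : y₀ ∈ LinearMap.range Λ₀) (hy₁ : y₁ ∈ LinearMap.range Λ₁)
    (τ : ℝ) (hτ : τ ∈ Set.Ioo (0 : ℝ) 1)
    (f₀τ f₁τ : F) (hf₀τ : Λ₀ f₀τ = y₀) (hf₁τ : Λ₁ f₁τ = y₁)
    (hτmin : ∀ g₀ g₁ : F, Λ₀ g₀ = y₀ → Λ₁ g₁ = y₁ →
      (1 - τ) * ‖P₀ f₀τ‖ ^ 2 + τ * ‖P₁ (f₀τ - f₁τ)‖ ^ 2 ≤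
        (1 - τ) * ‖P₀ g₀‖ ^ 2 + τ * ‖P₁ (g₀ - g₁)‖ ^ 2) :
    ∀ h₀ ∈ LinearMap.ker Λ₀, ∀ h₁ ∈ LinearMap.ker Λ₁,
      (inner ℝ (P₀ f₀τ) (P₀ h₀) : ℝ) = 0 ∧
        (inner ℝ (P₁ (f₀τ - f₁τ)) (P₁ (h₀ - h₁)) : ℝ) = 0 := by
  obtain ⟨hτ0, hτ1⟩ := hτ
  -- first-order condition
  have key : ∀ h₀ ∈ LinearMap.ker Λ₀, ∀ h₁ ∈ LinearMap.ker Λ₁,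
      (1 - τ) * (inner ℝ (P₀ f₀τ) (P₀ h₀) : ℝ) +
        τ * (inner ℝ (P₁ (f₀τ - f₁τ)) (P₁ (h₀ - h₁)) : ℝ) = 0 := by
    intro h₀ hh₀ h₁ hh₁
    rw [LinearMap.mem_ker] at hh₀ hh₁
    apply quad_aux _ ((1 - τ) * ‖P₀ h₀‖ ^ 2 + τ * ‖P₁ (h₀ - h₁)‖ ^ 2)
    · have := sq_nonneg ‖P₀ h₀‖
      have := sq_nonneg ‖P₁ (h₀ - h₁)‖
      nlinarith
    · intro t
      have hc₀ : Λ₀ (f₀τ + t • h₀) = y₀ := by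
        simp [map_add, map_smul, hh₀, hf₀τ]
      have hc₁ : Λ₁ (f₁τ + t • h₁) = y₁ := by
        simp [map_add, map_smul, hh₁, hf₁τ]
      have hmin := hτmin (f₀τ + t • h₀) (f₁τ + t • h₁) hc₀ hc₁
      have e₀ : P₀ (f₀τ + t • h₀) = P₀ f₀τ + t • P₀ h₀ := by
        simp [map_add, map_smul]
      have e₁ : P₁ ((f₀τ + t • h₀) - (f₁τ + t • h₁)) =
          P₁ (f₀τ - f₁τ) + t • P₁ (h₀ - h₁) := by
        rw [← map_smul, ← map_add]
        congr 1
        module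
      rw [e₀, e₁] at hmin
      have n₀ : ‖P₀ f₀τ + t • P₀ h₀‖ ^ 2 =
          ‖P₀ f₀τ‖ ^ 2 + 2 * (t * inner ℝ (P₀ f₀τ) (P₀ h₀)) + t ^ 2 * ‖P₀ h₀‖ ^ 2 := by
        rw [norm_add_sq_real, real_inner_smul_right, norm_smul]
        simp [mul_pow, sq_abs]
      have n₁ : ‖P₁ (f₀τ - f₁τ) + t • P₁ (h₀ - h₁)‖ ^ 2 =
          ‖P₁ (f₀τ - f₁τ)‖ ^ 2 + 2 * (t * inner ℝ (P₁ (f₀τ - f₁τ)) (P₁ (h₀ - h₁))) +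
            t ^ 2 * ‖P₁ (h₀ - h₁)‖ ^ 2 := by
        rw [norm_add_sq_real, real_inner_smul_right, norm_smul]
        simp [mul_pow, sq_abs]
      rw [n₀, n₁] at hmin
      nlinarith [hmin]
  intro h₀ hh₀ h₁ hh₁
  -- orthogonality against ker Λ₁ alone
  have e1 : ∀ k ∈ LinearMap.ker Λ₁, (inner ℝ (P₁ (f₀τ - f₁τ)) (P₁ k) : ℝ) = 0 := by
    intro k hk
    have := key 0 (by simp) k hk
    rw [map_zero, inner_zero_right] at this
    have : τ * (inner ℝ (P₁ (f₀τ - f₁τ)) (P₁ (0 - k)) : ℝ) = 0 := by linarith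
    have h2 : (inner ℝ (P₁ (f₀τ - f₁τ)) (P₁ (0 - k)) : ℝ) = 0 := by
      rcases mul_eq_zero.mp this with h | h
      · exact absurd h (ne_of_gt hτ0)
      · exact h
    rw [zero_sub, map_neg, inner_neg_right] at h2
    linarith
  have hsplit : (inner ℝ (P₁ (f₀τ - f₁τ)) (P₁ (h₀ - h₁)) : ℝ) =
      (inner ℝ (P₁ (f₀τ - f₁τ)) (P₁ h₀) : ℝ) - (inner ℝ (P₁ (f₀τ - f₁τ)) (P₁ h₁) : ℝ) := by
    rw [show P₁ (h₀ - h₁) = P₁ h₀ - P₁ h₁ from map_sub _ _ _, inner_sub_right]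
  have hPh₁ := e1 h₁ hh₁
  have hkey := key h₀ hh₀ h₁ hh₁
  have hkey' : (1 - τ) * (inner ℝ (P₀ f₀τ) (P₀ h₀) : ℝ) +
      τ * (inner ℝ (P₁ (f₀τ - f₁τ)) (P₁ h₀) : ℝ) = 0 := by
    rw [hsplit, hPh₁] at hkey
    linarith
  have hI₁ : (inner ℝ (P₁ (f₀τ - f₁τ)) (P₁ h₀) : ℝ) = 0 := by
    rcases hker with hk | hk
    · have : P₁ h₀ = 0 := hk hh₀
      rw [this, inner_zero_right]
    · exact e1 h₀ (hk hh₀)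
  have hI₀ : (inner ℝ (P₀ f₀τ) (P₀ h₀) : ℝ) = 0 := by
    have h1τ : (1 : ℝ) - τ ≠ 0 := by linarith
    have := hkey'
    rw [hI₁, mul_zero, add_zero] at this
    exact (mul_eq_zero.mp this).resolve_left h1τ
  refine ⟨hI₀, ?_⟩
  rw [hsplit, hI₁, hPh₁]
  ring
end
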